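/- arXiv:1706.03831 — 10 statements merged into one kernel-verified Lean document; each statement's English description precedes it below -/
import Mathlib

section
/- Let G = (D, τ0, τ1, τ2) be an orientable graph-encoded map (ribbon graph) and let A ⊆ D be closed under τ0 and τ2. Then the partial dual G^A is bipartite if and only if there exists an all-crossing direction of the medial graph G_m whose set of c-edges is exactly the set of edges contained in A; explicitly, if and only if there exists o : D → Bool with o(τ1 f) = ¬o(f) for all f ∈ D, with o(τ2 f) = o(f) and o(τ0 f) = ¬o(f) for all f ∈ A, and with o(τ0 f) = o(f) and o(τ2 f) = ¬o(f) for all f ∈ D \ A. -/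
/-- **Theorem (bipartite partial duals of orientable ribbon graphs).**
Let `G = (D, τ0, τ1, τ2)` be an orientable graph-encoded map and `A ⊆ D` closed under
`τ0` and `τ2`, with `σ0 = τ0^A`, `σ2 = τ2^A` the involutions of the partial dual `G^A`.
Then `G^A` is bipartite iff there is an all-crossing direction of the medial graph `G_m`
whose set of `c`-edges is exactly the set of edges contained in `A`. -/
theorem bipartite_partialDual_iff_allCrossing_orientable
    {D : Type*} [Fintype D] [Nonempty D]
    (τ0 τ1 τ2 : Equiv.Perm D)
    (h0i : ∀ f, τ0 (τ0 f) = f) (h0f : ∀ f, τ0 f ≠ f)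
    (h1i : ∀ f, τ1 (τ1 f) = f) (h1f : ∀ f, τ1 f ≠ f)
    (h2i : ∀ f, τ2 (τ2 f) = f) (h2f : ∀ f, τ2 f ≠ f)
    (hcomm : ∀ f, τ0 (τ2 f) = τ2 (τ0 f))
    (h02f : ∀ f, τ0 (τ2 f) ≠ f)
    -- G is orientable
    (horient : ∃ ε : D → Bool, ∀ f,
      ε (τ0 f) = !ε f ∧ ε (τ1 f) = !ε f ∧ ε (τ2 f) = !ε f)
    (A : Set D) (hA0 : ∀ f ∈ A, τ0 f ∈ A) (hA2 : ∀ f ∈ A, τ2 f ∈ A)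
    -- σ0 is τ0^A and σ2 is τ2^A
    (σ0 σ2 : Equiv.Perm D)
    (hσ0in : ∀ f ∈ A, σ0 f = τ2 f) (hσ0out : ∀ f ∉ A, σ0 f = τ0 f)
    (hσ2in : ∀ f ∈ A, σ2 f = τ0 f) (hσ2out : ∀ f ∉ A, σ2 f = τ2 f) :
    -- G^A is bipartite
    (∃ χ : D → Bool,
      (∀ f : D, ∀ g ∈ MulAction.orbit
          (Subgroup.closure {τ1, σ2} : Subgroup (Equiv.Perm D)) f, χ g = χ f) ∧
      (∀ f : D, χ (σ0 f) = !χ f)) ↔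
    -- A is the set of c-edges of an all-crossing direction of G_m
    (∃ o : D → Bool,
      (∀ f : D, o (τ1 f) = !o f) ∧
      (∀ f ∈ A, o (τ2 f) = o f ∧ o (τ0 f) = !o f) ∧
      (∀ f ∉ A, o (τ0 f) = o f ∧ o (τ2 f) = !o f)) := by
  obtain ⟨ε, hε⟩ := horient
  have hxor1 : ∀ a b : Bool, xor (!a) (!b) = xor a b := by decide
  have hxor2 : ∀ a b : Bool, xor a (!b) = !(xor a b) := by decide
  have hxor3 : ∀ a b : Bool, xor (!a) b = !(xor a b) := by decide
  constructor
  · rintro ⟨χ, hχorb, hχ0⟩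
    have hτ1 : ∀ f, χ (τ1 f) = χ f := fun f =>
      hχorb f (τ1 f) ⟨⟨τ1, Subgroup.subset_closure (Set.mem_insert _ _)⟩, rfl⟩
    have hσ2 : ∀ f, χ (σ2 f) = χ f := fun f =>
      hχorb f (σ2 f) ⟨⟨σ2, Subgroup.subset_closure (Set.mem_insert_of_mem _ rfl)⟩, rfl⟩
    refine ⟨fun f => xor (χ f) (ε f), ?_, ?_, ?_⟩
    · intro f
      simp only [hτ1, (hε f).2.1, hxor2]
    · intro f hf
      constructor
      · have h2 : χ (τ2 f) = !χ f := by rw [← hσ0in f hf, hχ0]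
        simp only [h2, (hε f).2.2, hxor1]
      · have h0 : χ (τ0 f) = χ f := by rw [← hσ2in f hf, hσ2]
        simp only [h0, (hε f).1, hxor2]
    · intro f hf
      constructor
      · have h0 : χ (τ0 f) = !χ f := by rw [← hσ0out f hf, hχ0]
        simp only [h0, (hε f).1, hxor1]
      · have h2 : χ (τ2 f) = χ f := by rw [← hσ2out f hf, hσ2]
        simp only [h2, (hε f).2.2, hxor2]
  · rintro ⟨o, ho1, hoA, hoO⟩
    set χ : D → Bool := fun f => xor (o f) (ε f) with hχdef
    have hτ1 : ∀ f, χ (τ1 f) = χ f := by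
      intro f; simp only [hχdef, ho1 f, (hε f).2.1, hxor1]
    have hσ2 : ∀ f, χ (σ2 f) = χ f := by
      intro f
      by_cases hf : f ∈ A
      · rw [hσ2in f hf]; simp only [hχdef, (hoA f hf).2, (hε f).1, hxor1]
      · rw [hσ2out f hf]; simp only [hχdef, (hoO f hf).2, (hε f).2.2, hxor1]
    refine ⟨χ, ?_, ?_⟩
    · rintro f g ⟨⟨p, hp⟩, rfl⟩
      show χ (p f) = χ f
      induction hp using Subgroup.closure_induction generalizing f with
      | mem x hx =>
        rcases hx with hx | hx
        · subst hx; exact hτ1 f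
        · rw [Set.mem_singleton_iff] at hx; subst hx; exact hσ2 f
      | one => rfl
      | mul x y hx hy ihx ihy =>
        show χ (x (y f)) = χ f
        rw [ihx, ihy]
      | inv x hx ih =>
        have := ih (x⁻¹ f)
        simpa using this.symm
    · intro f
      by_cases hf : f ∈ A
      · rw [hσ0in f hf]; simp only [hχdef, (hoA f hf).1, (hε f).2.2, hxor2]
      · rw [hσ0out f hf]; simp only [hχdef, (hoO f hf).1, (hε f).1, hxor2]
end

section
/- Let G = (D, τ0, τ1, τ2) be a graph-encoded map (ribbon graph) and let A ⊆ D be closed under τ0 and τ2. Then the partial dual G^A is Eulerian (i.e., every orbit of the subgroup generated by {τ1, τ2^A} has cardinality divisible by 4) if and only if there exists o : D → Bool with o(τ1 f) = ¬o(f) for all f ∈ D, o(τ0 f) = o(f) for all f ∈ A, and o(τ2 f) = o(f) for all f ∈ D \ A; equivalently, if and only if A is the union of the set of all d-edges and a set of some t-edges arising from a crossing-total direction of the medial graph G_m. -/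
/-!
For fixed-point-free involutions `a`, `b` put `c = a * b`. Since `a` conjugates `c` to `c⁻¹`, the
orbit of `x` under `⟨a, b⟩` is the union of the `c`-cycles of `x` and of `a x`; these are disjoint
(a common point would produce a fixed point of `a` or of `b` halfway between them) and equally
long, so the orbit has twice the length of the `c`-cycle of `x`. A colouring `o` with
`o ∘ a = !o` and `o ∘ b = o` satisfies `o ∘ c = !o`, which forces every `c`-cycle to be even.
Conversely, if all `c`-cycles are even, colour the `c`-cycle of a chosen point of each orbit by the
parity of the number of `c`-steps from it, and the other `c`-cycle of the orbit through `a`.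
The partial dual `G^A` is the case `a = τ1`, `b = τ2^A`.
-/

open Function MulAction Subgroup

lemma MulAction.exists_orbit_section (G : Type*) {α : Type*} [Group G] [MulAction G α] :
    ∃ r : α → α, (∀ y, y ∈ orbit G (r y)) ∧ ∀ (g : G) y, r (g • y) = r y := by
  refine ⟨fun y => @Classical.epsilon _ ⟨y⟩ (· ∈ orbit G y), fun y => ?_, fun g y => ?_⟩
  · exact mem_orbit_symm.1 (Classical.epsilon_spec ⟨y, mem_orbit_self y⟩)
  · simp only [orbit_smul]

lemma Function.even_minimalPeriod_of_semiconj_not {β : Type*} {f : β → β} {o : β → Bool}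
    (h : Semiconj o f not) (x : β) : Even (minimalPeriod f x) := by
  by_contra hodd
  have hx : o x = !o x := by
    conv_lhs => rw [← iterate_minimalPeriod (f := f) (x := x)]
    rw [h.iterate_right, Bool.involutive_not.iterate_odd (Nat.not_even_iff_odd.1 hodd)]
  exact Bool.not_ne_self _ hx.symm

namespace Equiv.Perm

variable {α : Type*} {a b : Perm α}

lemma mul_self_eq_one_of_involutive (ha : Involutive a) : a * a = 1 := Perm.ext ha

lemma conj_mul_eq_inv (ha : Involutive a) (hb : Involutive b) :
    a * (a * b) * a⁻¹ = (a * b)⁻¹ := by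
  rw [mul_inv_rev, inv_eq_of_mul_eq_one_right (mul_self_eq_one_of_involutive ha),
    inv_eq_of_mul_eq_one_right (mul_self_eq_one_of_involutive hb), ← mul_assoc,
    mul_self_eq_one_of_involutive ha, one_mul]

lemma apply_zpow_mul_apply (ha : Involutive a) (hb : Involutive b) (m : ℤ) (x : α) :
    a (((a * b) ^ m) x) = ((a * b) ^ (-m)) (a x) := by
  rw [zpow_neg, ← inv_zpow, ← conj_mul_eq_inv ha hb, conj_zpow]
  simp

lemma sameCycle_mul_apply_apply_iff (ha : Involutive a) (hb : Involutive b) {x y : α} :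
    (a * b).SameCycle (a x) (a y) ↔ (a * b).SameCycle x y := by
  rw [← sameCycle_inv, ← conj_mul_eq_inv ha hb, sameCycle_conj]
  simp

lemma not_sameCycle_mul_self_apply (ha : Involutive a) (hb : Involutive b)
    (haf : ∀ x, a x ≠ x) (hbf : ∀ x, b x ≠ x) (x : α) : ¬ (a * b).SameCycle x (a x) := by
  rintro ⟨i, hi⟩
  obtain ⟨m, rfl | rfl⟩ := Int.even_or_odd' i
  · apply haf (((a * b) ^ m) x)
    rw [apply_zpow_mul_apply ha hb, ← hi, ← mul_apply, ← zpow_add]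
    ring_nf
  · apply hbf (((a * b) ^ m) x)
    apply a.injective
    calc a (b (((a * b) ^ m) x)) = ((a * b) ^ (-m + (2 * m + 1))) x := by
          rw [show -m + (2 * m + 1) = 1 + m by ring, zpow_one_add]; rfl
      _ = a (((a * b) ^ m) x) := by rw [zpow_add, mul_apply, hi, apply_zpow_mul_apply ha hb]

lemma mul_apply_apply_mul_apply (ha : Involutive a) (hb : Involutive b) (y : α) :
    (a * b) (a ((a * b) y)) = a y := by
  simp only [mul_apply, ha (b y), hb y]

lemma mul_mem_closure_pair {G : Type*} [Group G] (a b : G) : a * b ∈ closure {a, b} :=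
  mul_mem (subset_closure (Set.mem_insert a {b})) (subset_closure (Set.mem_insert_of_mem a rfl))

lemma mem_orbit_closure_pair_iff (ha : Involutive a) (hb : Involutive b) {x y : α} :
    y ∈ orbit (closure {a, b}) x ↔ (a * b).SameCycle x y ∨ (a * b).SameCycle x (a y) := by
  set P : α → Prop := fun y => (a * b).SameCycle x y ∨ (a * b).SameCycle x (a y)
  have hPa : ∀ y, P (a y) ↔ P y := fun y => by simp only [P, ha y, or_comm]
  have hPc : ∀ y, P ((a * b) y) ↔ P y := fun y => by
    simp only [P, sameCycle_apply_right, ← mul_apply_apply_mul_apply ha hb y]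
  have hPb : ∀ y, P (b y) ↔ P y := fun y => by
    have := (hPa _).trans (hPc y)
    rwa [mul_apply, ha] at this
  have hP : ∀ g ∈ closure {a, b}, ∀ y, P (g y) ↔ P y := fun g hg => by
    induction hg using closure_induction with
    | mem g hg => rcases hg with hg | hg <;> rw [hg]; exacts [hPa, hPb]
    | one => exact fun y => .rfl
    | mul g h _ _ ihg ihh => exact fun y => (ihg _).trans (ihh y)
    | inv g _ ih => exact fun y => by rw [← ih, coe_inv, apply_symm_apply]
  constructor
  · rintro ⟨⟨g, hg⟩, rfl⟩
    exact (hP g hg x).2 (.inl .rfl)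
  · rintro (⟨i, rfl⟩ | ⟨i, hi⟩)
    · exact ⟨⟨_, zpow_mem (mul_mem_closure_pair a b) i⟩, rfl⟩
    · refine ⟨⟨_, mul_mem (subset_closure (Set.mem_insert a {b}))
        (zpow_mem (mul_mem_closure_pair a b) i)⟩, ?_⟩
      change a (((a * b) ^ i) x) = y
      rw [hi, ha]

lemma card_setOf_sameCycle (c : Perm α) (x : α) :
    Nat.card {y | c.SameCycle x y} = minimalPeriod c x := by
  have : {y | c.SameCycle x y} = orbit (zpowers c) x := by
    ext y
    simp [SameCycle, mem_orbit_iff, Subgroup.smul_def, Perm.smul_def]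
  rw [this, Nat.card_congr (orbitZPowersEquiv c x), Nat.card_zmod]
  rfl

lemma card_orbit_closure_pair (ha : Involutive a) (hb : Involutive b)
    (haf : ∀ x, a x ≠ x) (hbf : ∀ x, b x ≠ x) (x : α) :
    Nat.card (orbit (closure {a, b}) x) = 2 * minimalPeriod (a * b) x := by
  set S := {y | (a * b).SameCycle x y}
  have horbit : orbit (closure {a, b}) x = S ∪ a '' S := by
    ext y
    rw [ha.image_eq_preimage_symm]
    exact mem_orbit_closure_pair_iff ha hb
  have hdisj : _root_.Disjoint S (a '' S) := by
    rw [ha.image_eq_preimage_symm, Set.disjoint_left]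
    intro y hy hay
    exact not_sameCycle_mul_self_apply ha hb haf hbf x
      (hay.trans ((sameCycle_mul_apply_apply_iff ha hb).2 hy).symm)
  rw [← card_setOf_sameCycle, Nat.card_coe_set_eq, Nat.card_coe_set_eq, horbit,
    Set.ncard_def, Set.ncard_def, Set.encard_union_eq hdisj, a.injective.encard_image, ← two_mul,
    ENat.toNat_mul]
  rfl

lemma even_sub_of_zpow_apply_eq {c : Perm α} {x : α} (hx : Even (minimalPeriod c x)) {i j : ℤ}
    (h : (c ^ i) x = (c ^ j) x) : Even (i - j) := by
  have hfix : (c ^ (i - j)) • x = x :=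
    (c ^ j).injective (by rw [Perm.smul_def, ← mul_apply, ← zpow_add, add_sub_cancel, h])
  have hdvd := (zpow_smul_eq_iff_minimalPeriod_dvd).1 hfix
  exact even_iff_two_dvd.2 ((Int.natCast_dvd_natCast.2 (even_iff_two_dvd.1 hx)).trans hdvd)

def IsOddStep (c : Perm α) (u y : α) : Prop :=
  ∃ i : ℤ, Odd i ∧ (c ^ i) u = y

lemma isOddStep_zpow_apply_iff {c : Perm α} {u : α} (hu : Even (minimalPeriod c u)) {i : ℤ} :
    c.IsOddStep u ((c ^ i) u) ↔ Odd i := by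
  refine ⟨fun ⟨j, hj, h⟩ => ?_, fun hi => ⟨i, hi, rfl⟩⟩
  rwa [← Int.not_even_iff_odd, ← Int.even_sub.1 (even_sub_of_zpow_apply_eq hu h),
    Int.not_even_iff_odd]

lemma isOddStep_apply_iff {c : Perm α} {u y : α} (hu : Even (minimalPeriod c u))
    (h : c.SameCycle u y) : c.IsOddStep u (c y) ↔ ¬ c.IsOddStep u y := by
  obtain ⟨i, rfl⟩ := h
  rw [← mul_apply, ← zpow_one_add, isOddStep_zpow_apply_iff hu, isOddStep_zpow_apply_iff hu,
    add_comm, odd_add_one, Int.not_odd_iff_even]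

theorem exists_coloring_of_even_minimalPeriod (ha : Involutive a) (hb : Involutive b)
    (haf : ∀ x, a x ≠ x) (hbf : ∀ x, b x ≠ x) (heven : ∀ x, Even (minimalPeriod (a * b) x)) :
    ∃ o : α → Bool, (∀ x, o (a x) = !o x) ∧ ∀ x, o (b x) = o x := by
  classical
  obtain ⟨r, hr_mem, hr_smul⟩ := exists_orbit_section (closure {a, b} : Subgroup (Perm α)) (α := α)
  have hr_a : ∀ y, r (a y) = r y := hr_smul ⟨a, subset_closure (Set.mem_insert a {b})⟩
  have hr_c : ∀ y, r ((a * b) y) = r y := hr_smul ⟨a * b, mul_mem_closure_pair a b⟩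
  have hside : ∀ y, (a * b).SameCycle (r y) y ↔ ¬ (a * b).SameCycle (r y) (a y) := fun y =>
    ⟨fun h h' => not_sameCycle_mul_self_apply ha hb haf hbf y (h.symm.trans h'),
    ((mem_orbit_closure_pair_iff ha hb).1 (hr_mem y)).resolve_right⟩
  let o y := if (a * b).SameCycle (r y) y then decide ((a * b).IsOddStep (r y) y)
    else !decide ((a * b).IsOddStep (r y) (a y))
  have hoa : ∀ y, o (a y) = !o y := by
    intro y
    by_cases h : (a * b).SameCycle (r y) y
    · simp only [o, hr_a, ha y, if_neg ((hside y).1 h), if_pos h]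
    · simp only [o, hr_a, ha y, if_pos (not_not.1 (mt (hside y).2 h)), if_neg h, Bool.not_not]
  have hoc : ∀ y, o ((a * b) y) = !o y := by
    intro y
    have hca := mul_apply_apply_mul_apply ha hb y
    by_cases h : (a * b).SameCycle (r y) y
    · simp only [o, hr_c, sameCycle_apply_right, if_pos h, isOddStep_apply_iff (heven _) h,
        decide_not]
    · have h' : (a * b).SameCycle (r y) (a ((a * b) y)) := by
        rw [← sameCycle_apply_right, hca]
        exact not_not.1 (mt (hside y).2 h)
      simp only [o, hr_c, sameCycle_apply_right, if_neg h, ← hca,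
        isOddStep_apply_iff (heven _) h', decide_not, Bool.not_not]
  refine ⟨o, hoa, fun y => ?_⟩
  rw [show b y = a ((a * b) y) from (ha (b y)).symm, hoa, hoc, Bool.not_not]

theorem four_dvd_card_orbit_closure_pair_iff (ha : Involutive a) (hb : Involutive b)
    (haf : ∀ x, a x ≠ x) (hbf : ∀ x, b x ≠ x) :
    (∀ x : α, 4 ∣ Nat.card (orbit (closure {a, b}) x)) ↔
      ∃ o : α → Bool, (∀ x, o (a x) = !o x) ∧ ∀ x, o (b x) = o x := by
  have h4 : ∀ n : ℕ, 4 ∣ 2 * n ↔ Even n := fun n => by rw [even_iff_two_dvd]; omega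
  simp only [card_orbit_closure_pair ha hb haf hbf, h4]
  refine ⟨exists_coloring_of_even_minimalPeriod ha hb haf hbf, ?_⟩
  rintro ⟨o, hoa, hob⟩
  exact even_minimalPeriod_of_semiconj_not (o := o) fun y => by rw [mul_apply, hoa, hob]

end Equiv.Perm

theorem Function.Involutive.of_eq_on_of_eq_off {α : Type*} {σ f g : α → α} {A : Set α}
    (hf : Involutive f) (hg : Involutive g) (hfA : ∀ x ∈ A, f x ∈ A) (hgA : ∀ x ∈ A, g x ∈ A)
    (h_on : ∀ x ∈ A, σ x = f x) (h_off : ∀ x ∉ A, σ x = g x) : Involutive σ := by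
  intro x
  by_cases hx : x ∈ A
  · rw [h_on x hx, h_on _ (hfA x hx), hf]
  · have hgx : g x ∉ A := fun h => hx (hg x ▸ hgA _ h)
    rw [h_off x hx, h_off _ hgx, hg]

theorem eulerian_partialDual_iff_crossingTotal_general
    {D : Type*}
    (τ0 τ1 τ2 : Equiv.Perm D)
    (h0i : ∀ f, τ0 (τ0 f) = f) (h0f : ∀ f, τ0 f ≠ f)
    (h1i : ∀ f, τ1 (τ1 f) = f) (h1f : ∀ f, τ1 f ≠ f)
    (h2i : ∀ f, τ2 (τ2 f) = f) (h2f : ∀ f, τ2 f ≠ f)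
    (A : Set D) (hA0 : ∀ f ∈ A, τ0 f ∈ A) (hA2 : ∀ f ∈ A, τ2 f ∈ A)
    -- σ2 is τ2^A : agrees with τ0 on A and with τ2 on D \ A
    (σ2 : Equiv.Perm D)
    (hσ2in : ∀ f ∈ A, σ2 f = τ0 f) (hσ2out : ∀ f ∉ A, σ2 f = τ2 f) :
    (∀ f : D, 4 ∣ Nat.card
        (MulAction.orbit (Subgroup.closure {τ1, σ2} : Subgroup (Equiv.Perm D)) f)) ↔
    (∃ o : D → Bool,
      (∀ f : D, o (τ1 f) = !o f) ∧
      (∀ f ∈ A, o (τ0 f) = o f) ∧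
      (∀ f ∉ A, o (τ2 f) = o f)) := by
  have hσ2i : Involutive σ2 := Involutive.of_eq_on_of_eq_off h0i h2i hA0 hA2 hσ2in hσ2out
  have hσ2f : ∀ f, σ2 f ≠ f := fun f => by
    by_cases hf : f ∈ A
    · exact hσ2in f hf ▸ h0f f
    · exact hσ2out f hf ▸ h2f f
  rw [Equiv.Perm.four_dvd_card_orbit_closure_pair_iff h1i hσ2i h1f hσ2f]
  refine exists_congr fun o => and_congr_right fun _ => ⟨fun h => ⟨?_, ?_⟩, ?_⟩
  · exact fun f hf => hσ2in f hf ▸ h f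
  · exact fun f hf => hσ2out f hf ▸ h f
  · rintro ⟨h_on, h_off⟩ f
    by_cases hf : f ∈ A
    · exact (hσ2in f hf).symm ▸ h_on f hf
    · exact (hσ2out f hf).symm ▸ h_off f hf

/-- **Theorem (Eulerian partial duals via crossing-total directions).**
Let `G = (D, τ0, τ1, τ2)` be a graph-encoded map, `A ⊆ D` closed under `τ0` and `τ2`,
and `σ2 = τ2^A` an involution of the partial dual `G^A`.  Then `G^A` is Eulerian
(every `⟨τ1, τ2^A⟩`-orbit has cardinality divisible by 4) iff there exists
`o : D → Bool` with `o (τ1 f) = ¬ o f` for all `f`, `o (τ0 f) = o f` on `A` and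
`o (τ2 f) = o f` off `A` — i.e. iff `A` is the union of the set of all `d`-edges and
a set of some `t`-edges arising from a crossing-total direction of `G_m`. -/
theorem eulerian_partialDual_iff_crossingTotal
    {D : Type*} [Fintype D] [Nonempty D]
    (τ0 τ1 τ2 : Equiv.Perm D)
    (h0i : ∀ f, τ0 (τ0 f) = f) (h0f : ∀ f, τ0 f ≠ f)
    (h1i : ∀ f, τ1 (τ1 f) = f) (h1f : ∀ f, τ1 f ≠ f)
    (h2i : ∀ f, τ2 (τ2 f) = f) (h2f : ∀ f, τ2 f ≠ f)
    (hcomm : ∀ f, τ0 (τ2 f) = τ2 (τ0 f))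
    (h02f : ∀ f, τ0 (τ2 f) ≠ f)
    (A : Set D) (hA0 : ∀ f ∈ A, τ0 f ∈ A) (hA2 : ∀ f ∈ A, τ2 f ∈ A)
    -- σ2 is τ2^A : agrees with τ0 on A and with τ2 on D \ A
    (σ2 : Equiv.Perm D)
    (hσ2in : ∀ f ∈ A, σ2 f = τ0 f) (hσ2out : ∀ f ∉ A, σ2 f = τ2 f) :
    (∀ f : D, 4 ∣ Nat.card
        (MulAction.orbit (Subgroup.closure {τ1, σ2} : Subgroup (Equiv.Perm D)) f)) ↔
    (∃ o : D → Bool,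
      (∀ f : D, o (τ1 f) = !o f) ∧
      (∀ f ∈ A, o (τ0 f) = o f) ∧
      (∀ f ∉ A, o (τ2 f) = o f)) :=
  eulerian_partialDual_iff_crossingTotal_general τ0 τ1 τ2 h0i h0f h1i h1f h2i h2f A hA0 hA2 σ2 hσ2in
    hσ2out
end

section
/- Let G = (D, τ0, τ1, τ2) be a graph-encoded map (ribbon graph) and let A ⊆ D be closed under τ0 and τ2. Then the partial dual G^A is an even-face graph (i.e., every orbit of the subgroup generated by {τ0^A, τ1} has cardinality divisible by 4) if and only if there exists o : D → Bool with o(τ1 f) = ¬o(f) for all f ∈ D, o(τ2 f) = o(f) for all f ∈ A, and o(τ0 f) = o(f) for all f ∈ D \ A; equivalently, if and only if A is the union of the set of all c-edges and a set of some t-edges arising from a crossing-total direction of the medial graph G_m. -/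
open MulAction Subgroup Function

private theorem evenFace_key {D : Type*} [Fintype D] (a b : Equiv.Perm D)
    (hai : ∀ f, a (a f) = f) (haf : ∀ f, a f ≠ f)
    (hbi : ∀ f, b (b f) = f) (hbf : ∀ f, b f ≠ f) :
    (∀ f : D, 4 ∣ Nat.card
        (MulAction.orbit (Subgroup.closure {a, b} : Subgroup (Equiv.Perm D)) f)) ↔
    ∃ o : D → Bool, (∀ f, o (a f) = o f) ∧ (∀ f, o (b f) = !o f) := by
  classical
  set G : Subgroup (Equiv.Perm D) := Subgroup.closure {a, b} with hG
  have haa : a * a = 1 := Equiv.ext fun f => hai f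
  have hbb : b * b = 1 := Equiv.ext fun f => hbi f
  have ainv : a⁻¹ = a := inv_eq_of_mul_eq_one_right haa
  have binv : b⁻¹ = b := inv_eq_of_mul_eq_one_right hbb
  set π : Equiv.Perm D := a * b with hπ
  have hbapp : ∀ x, b x = a (π x) := by
    intro x
    have h : a * π = b := by rw [hπ, ← mul_assoc, haa, one_mul]
    calc b x = (a * π) x := by rw [h]
    _ = a (π x) := rfl
  have hπinv : π⁻¹ = b * a := by rw [hπ, mul_inv_rev, ainv, binv]
  have h1 : a * π * a⁻¹ = π⁻¹ := by
    rw [hπinv, ainv, hπ, ← mul_assoc, haa, one_mul]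
  have hconj : ∀ k : ℤ, a * π ^ k * a⁻¹ = π ^ (-k) := by
    intro k
    have h2 := map_zpow (MulAut.conj a) π k
    simp only [MulAut.conj_apply] at h2
    rw [h2, h1, inv_zpow, zpow_neg]
  have hc : ∀ (k : ℤ) (x : D), a ((π ^ k) x) = (π ^ (-k)) (a x) := by
    intro k x
    have h : (a * π ^ k * a⁻¹) (a x) = (π ^ (-k)) (a x) := by rw [hconj k]
    simpa [Equiv.Perm.mul_apply, ainv, hai] using h
  have hzz : ∀ (i j : ℤ) (x : D), (π ^ i) ((π ^ j) x) = (π ^ (i + j)) x := by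
    intro i j x
    rw [← Equiv.Perm.mul_apply, ← zpow_add]
  have hπ1 : ∀ (j : ℤ) (x : D), π ((π ^ j) x) = (π ^ (1 + j)) x := by
    intro j x
    simpa using hzz 1 j x
  -- Q1 : a f is never on the π-cycle of f
  have hQ1 : ∀ f : D, ¬ ∃ m : ℤ, (π ^ m) f = a f := by
    rintro f ⟨m, hm⟩
    rcases Int.even_or_odd m with ⟨j, hj⟩ | ⟨j, hj⟩
    · apply haf ((π ^ j) f)
      calc a ((π ^ j) f) = (π ^ (-j)) (a f) := hc j f
        _ = (π ^ (-j)) ((π ^ m) f) := by rw [hm]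
        _ = (π ^ (-j + m)) f := hzz _ _ _
        _ = (π ^ j) f := by rw [show -j + m = j by omega]
    · apply hbf ((π ^ j) f)
      calc b ((π ^ j) f) = a (π ((π ^ j) f)) := hbapp _
        _ = a ((π ^ (1 + j)) f) := by rw [hπ1]
        _ = (π ^ (-(1 + j))) (a f) := hc _ _
        _ = (π ^ (-(1 + j))) ((π ^ m) f) := by rw [hm]
        _ = (π ^ (-(1 + j) + m)) f := hzz _ _ _
        _ = (π ^ j) f := by rw [show -(1 + j) + m = j by omega]
  have haG : a ∈ G := subset_closure (by simp)
  have hbG : b ∈ G := subset_closure (by simp)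
  have hπG : π ∈ G := mul_mem haG hbG
  -- the set S f
  set S : D → Set D := fun f => {y | ∃ k : ℤ, (π ^ k) f = y ∨ (π ^ k) (a f) = y} with hS
  have hSa : ∀ (f : D), ∀ x ∈ S f, a x ∈ S f := by
    rintro f x ⟨k, hk | hk⟩
    · exact ⟨-k, Or.inr (by rw [← hk, hc])⟩
    · refine ⟨-k, Or.inl ?_⟩
      rw [← hk, hc, hai]
  have hSπ : ∀ (f : D), ∀ x ∈ S f, π x ∈ S f := by
    rintro f x ⟨k, hk | hk⟩
    · exact ⟨1 + k, Or.inl (by rw [← hk, hπ1])⟩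
    · exact ⟨1 + k, Or.inr (by rw [← hk, hπ1])⟩
  have hSb : ∀ (f : D), ∀ x ∈ S f, b x ∈ S f := by
    intro f x hx
    rw [hbapp]
    exact hSa f _ (hSπ f x hx)
  have hself : ∀ f : D, f ∈ S f := fun f => ⟨0, Or.inl (by simp)⟩
  have horb : ∀ f : D, (MulAction.orbit G f : Set D) = S f := by
    intro f
    apply Set.eq_of_subset_of_subset
    · rintro y ⟨⟨g, hg⟩, rfl⟩
      have hind : (∀ x ∈ S f, g x ∈ S f) ∧ (∀ x ∈ S f, g⁻¹ x ∈ S f) := by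
        induction hg using Subgroup.closure_induction with
        | mem x hx =>
          rcases hx with rfl | rfl
          · exact ⟨hSa f, by rw [ainv]; exact hSa f⟩
          · exact ⟨hSb f, by rw [binv]; exact hSb f⟩
        | one => simp
        | mul x y hx hy ihx ihy =>
          refine ⟨fun z hz => ?_, fun z hz => ?_⟩
          · exact ihx.1 _ (ihy.1 _ hz)
          · rw [mul_inv_rev]; exact ihy.2 _ (ihx.2 _ hz)
        | inv x hx ih =>
          exact ⟨ih.2, fun z hz => by rw [inv_inv]; exact ih.1 z hz⟩
      exact hind.1 f (hself f)
    · rintro y ⟨k, hk | hk⟩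
      · exact ⟨⟨π ^ k, zpow_mem hπG k⟩, hk⟩
      · exact ⟨⟨π ^ k * a, mul_mem (zpow_mem hπG k) haG⟩, hk⟩
  have hCmem : ∀ f y : D, y ∈ orbit (zpowers π) f ↔ ∃ k : ℤ, (π ^ k) f = y := by
    intro f y
    constructor
    · rintro ⟨⟨g, hg⟩, rfl⟩
      obtain ⟨k, rfl⟩ := Subgroup.mem_zpowers_iff.mp hg
      exact ⟨k, rfl⟩
    · rintro ⟨k, rfl⟩
      exact ⟨⟨π ^ k, zpow_mem (mem_zpowers π) k⟩, rfl⟩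
  have hsplit : ∀ f : D, S f = orbit (zpowers π) f ∪ orbit (zpowers π) (a f) := by
    intro f
    ext y
    simp only [Set.mem_union, hCmem, hS, Set.mem_setOf_eq, ← exists_or]
  set n : D → ℕ := fun f => Function.minimalPeriod (π • ·) f with hn
  have hCcard : ∀ f : D, (orbit (zpowers π) f).ncard = n f := by
    intro f
    rw [← Nat.card_coe_set_eq, Nat.card_congr (orbitZPowersEquiv π f), Nat.card_zmod]
  have hdisj : ∀ f : D, Disjoint (orbit (zpowers π) f) (orbit (zpowers π) (a f)) := by
    intro f
    rw [Set.disjoint_left]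
    rintro y hy hy'
    obtain ⟨i, hi⟩ := (hCmem f y).mp hy
    obtain ⟨j, hj⟩ := (hCmem (a f) y).mp hy'
    refine hQ1 f ⟨-j + i, ?_⟩
    calc (π ^ (-j + i)) f = (π ^ (-j : ℤ)) ((π ^ i) f) := (hzz _ _ _).symm
      _ = (π ^ (-j : ℤ)) ((π ^ j) (a f)) := by rw [hi, hj]
      _ = (π ^ ((-j) + j)) (a f) := hzz _ _ _
      _ = a f := by simp
  have hnmod : ∀ (f : D) (k : ℤ), (π ^ k) f = f → ((n f : ℤ)) ∣ k := by
    intro f k hk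
    exact (MulAction.zpow_smul_eq_iff_minimalPeriod_dvd).mp hk
  have hperiod : ∀ f : D, (π ^ (n f : ℤ)) f = f := by
    intro f
    have h := (MulAction.pow_smul_eq_iff_minimalPeriod_dvd (a := π) (b := f)).mpr dvd_rfl
    rw [← zpow_natCast] at h
    exact h
  have hna : ∀ f : D, n (a f) = n f := by
    have hdvd : ∀ f : D, n (a f) ∣ n f := by
      intro f
      have h0 : (π ^ (-(n f : ℤ))) f = f := by
        have := hperiod f
        calc (π ^ (-(n f : ℤ))) f = (π ^ (-(n f : ℤ))) ((π ^ (n f : ℤ)) f) := by rw [this]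
          _ = (π ^ ((-(n f : ℤ)) + (n f : ℤ))) f := hzz _ _ _
          _ = f := by simp
      have h1 : (π ^ ((n f : ℤ))) (a f) = a f := by
        have := hc (-(n f : ℤ)) f
        rw [h0, neg_neg] at this
        exact this.symm
      have := hnmod (a f) _ h1
      exact_mod_cast this
    intro f
    have h1 := hdvd f
    have h2 := hdvd (a f)
    rw [hai f] at h2
    exact Nat.dvd_antisymm h1 h2
  have horbcard : ∀ f : D, Nat.card (MulAction.orbit G f) = 2 * n f := by
    intro f
    rw [Nat.card_coe_set_eq, horb f, hsplit f,
      Set.ncard_union_eq (hdisj f) (Set.toFinite _) (Set.toFinite _), hCcard, hCcard, hna]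
    omega
  constructor
  · intro h4
    have heven : ∀ f : D, 2 ∣ n f := by
      intro f
      have := h4 f
      rw [horbcard f] at this
      omega
    -- representative of each orbit
    set q : D → D := fun x => (Quotient.mk (MulAction.orbitRel G D) x).out with hq
    have hqorb : ∀ x : D, x ∈ S (q x) := by
      intro x
      rw [← horb]
      have h3 : q x ∈ MulAction.orbit G x :=
        (MulAction.orbitRel_apply).mp (Quotient.mk_out x)
      obtain ⟨g, hg⟩ := h3
      exact ⟨g⁻¹, by rw [← hg]; simp⟩
    have hqinv : ∀ (g : Equiv.Perm D), g ∈ G → ∀ x : D, q (g x) = q x := by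
      intro g hg x
      have h : (Quotient.mk (MulAction.orbitRel G D) (g x))
          = Quotient.mk (MulAction.orbitRel G D) x :=
        Quotient.sound ((MulAction.orbitRel_apply).mpr ⟨⟨g, hg⟩, rfl⟩)
      simp only [hq, h]
    set P : D → ℤ → Prop := fun x k => (π ^ k) (q x) = x ∨ (π ^ k) (a (q x)) = x with hP
    have hE : ∀ x : D, ∃ k : ℤ, P x k := fun x => hqorb x
    have hshift : ∀ (r x : D) (i j : ℤ), (π ^ i) r = x → (π ^ j) r = x →
        (π ^ (i - j)) r = r := by
      intro r x i j hi hj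
      have h1 : (π ^ ((-j) + i)) r = (π ^ (-j : ℤ)) x := by rw [← hzz, hi]
      have h2 : (π ^ ((-j) + j)) r = (π ^ (-j : ℤ)) x := by rw [← hzz, hj]
      calc (π ^ (i - j)) r = (π ^ ((-j) + i)) r := by rw [show (-j) + i = i - j by omega]
        _ = (π ^ ((-j) + j)) r := h1.trans h2.symm
        _ = r := by simp
    have hcross : ∀ (r x : D) (i j : ℤ), (π ^ i) r = x → (π ^ j) (a r) = x → False := by
      intro r x i j hi hj
      refine hQ1 r ⟨i - j, ?_⟩
      calc (π ^ (i - j)) r = (π ^ ((-j) + i)) r := by rw [show (-j) + i = i - j by omega]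
        _ = (π ^ (-j : ℤ)) ((π ^ i) r) := (hzz _ _ _).symm
        _ = (π ^ (-j : ℤ)) ((π ^ j) (a r)) := by rw [hi, hj]
        _ = (π ^ ((-j) + j)) (a r) := hzz _ _ _
        _ = a r := by simp
    have hpar : ∀ (u v : ℤ), (2 : ℤ) ∣ (u - v) → (Odd u ↔ Odd v) := by
      intro u v huv
      obtain ⟨c, hc'⟩ := huv
      rw [Int.odd_iff, Int.odd_iff]
      omega
    have htwo : ∀ (r : D) (m : ℤ), (π ^ m) r = r → (2 : ℤ) ∣ m := by
      intro r m hm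
      exact dvd_trans (by exact_mod_cast heven r) (hnmod r m hm)
    have hU : ∀ (x : D) (k k' : ℤ), P x k → P x k' → (Odd k ↔ Odd k') := by
      intro x k k' hk hk'
      rcases hk with h | h <;> rcases hk' with h' | h'
      · exact hpar k k' (htwo _ _ (hshift _ _ _ _ h h'))
      · exact absurd (hcross _ _ _ _ h h') (by simp)
      · exact absurd (hcross _ _ _ _ h' h) (by simp)
      · exact hpar k k' (htwo _ _ (hshift _ _ _ _ h h'))
    have hPa : ∀ (x : D) (k : ℤ), P x k → P (a x) (-k) := by
      intro x k hk
      have hq' : q (a x) = q x := hqinv a haG x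
      rcases hk with h | h
      · right
        rw [hq']
        exact (hc k (q x)).symm.trans (congrArg a h)
      · left
        rw [hq']
        have h3 := hc k (a (q x))
        rw [h, hai] at h3
        exact h3.symm
    have hPb : ∀ (x : D) (k : ℤ), P x k → P (b x) (-(1 + k)) := by
      intro x k hk
      have hq' : q (b x) = q x := hqinv b hbG x
      rcases hk with h | h
      · right
        rw [hq']
        have h2 : π x = (π ^ (1 + k)) (q x) :=
          (congrArg π h).symm.trans (hπ1 k (q x))
        exact ((hc (1 + k) (q x)).symm.trans (congrArg a h2.symm)).trans (hbapp x).symm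
      · left
        rw [hq']
        have h2 : π x = (π ^ (1 + k)) (a (q x)) :=
          (congrArg π h).symm.trans (hπ1 k (a (q x)))
        have h3 := hc (1 + k) (a (q x))
        rw [hai] at h3
        exact h3.symm.trans ((congrArg a h2.symm).trans (hbapp x).symm)
    refine ⟨fun x => decide (∃ k : ℤ, Odd k ∧ P x k), ?_, ?_⟩
    · intro x
      show decide (∃ k : ℤ, Odd k ∧ P (a x) k) = decide (∃ k : ℤ, Odd k ∧ P x k)
      rw [decide_eq_decide]
      constructor
      · rintro ⟨k, hk, hPk⟩
        have h := hPa (a x) k hPk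
        rw [hai x] at h
        exact ⟨-k, odd_neg.mpr hk, h⟩
      · rintro ⟨k, hk, hPk⟩
        exact ⟨-k, odd_neg.mpr hk, hPa x k hPk⟩
    · intro x
      show decide (∃ k : ℤ, Odd k ∧ P (b x) k) = !decide (∃ k : ℤ, Odd k ∧ P x k)
      have hoddflip : ∀ k : ℤ, Odd (-(1 + k)) ↔ ¬ Odd k := by
        intro k
        rw [Int.odd_iff, Int.odd_iff]
        omega
      by_cases hB : ∃ k : ℤ, Odd k ∧ P x k
      · obtain ⟨k, hk, hPk⟩ := hB
        have h1 : P (b x) (-(1 + k)) := hPb x k hPk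
        have h2 : ¬ ∃ k' : ℤ, Odd k' ∧ P (b x) k' := by
          rintro ⟨k', hk', hPk'⟩
          have h3 := (hU (b x) k' (-(1 + k)) hPk' h1).mp hk'
          exact (hoddflip k).mp h3 hk
        rw [decide_eq_false h2, decide_eq_true ⟨k, hk, hPk⟩]
        rfl
      · obtain ⟨k, hPk⟩ := hE x
        have hkeven : ¬ Odd k := fun hk => hB ⟨k, hk, hPk⟩
        have h1 : P (b x) (-(1 + k)) := hPb x k hPk
        rw [decide_eq_true ⟨-(1 + k), (hoddflip k).mpr hkeven, h1⟩, decide_eq_false hB]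
        rfl
  · rintro ⟨o, hoa, hob⟩ f
    rw [horbcard f]
    have hflip : ∀ x : D, o (π x) = !o x := by
      intro x
      have : π x = a (b x) := rfl
      rw [this, hoa, hob]
    have hiter : ∀ (k : ℕ) (x : D), o ((π ^ k) x) = if Even k then o x else !o x := by
      intro k
      induction k with
      | zero => simp
      | succ m ih =>
        intro x
        have hstep : (π ^ (m + 1)) x = π ((π ^ m) x) := by
          rw [← Equiv.Perm.mul_apply, ← pow_succ']
        rw [hstep, hflip, ih]
        rcases Nat.even_or_odd m with hm | hm
        · have h2 : ¬ Even (m + 1) := by rw [Nat.even_add_one]; exact fun h => h hm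
          rw [if_pos hm, if_neg h2]
        · have h1 : ¬ Even m := Nat.not_even_iff_odd.mpr hm
          have h2 : Even (m + 1) := Nat.even_add_one.mpr h1
          rw [if_neg h1, if_pos h2, Bool.not_not]
    have hp : (π ^ (n f)) f = f := by
      have := hperiod f
      rwa [zpow_natCast] at this
    have := hiter (n f) f
    rw [hp] at this
    by_cases he : Even (n f)
    · obtain ⟨c, hc'⟩ := he
      omega
    · rw [if_neg he] at this
      cases h : o f <;> rw [h] at this <;> simp at this

/-- **Corollary (even-face partial duals via crossing-total directions).**
Let `G = (D, τ0, τ1, τ2)` be a graph-encoded map, `A ⊆ D` closed under `τ0` and `τ2`,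
and `σ0 = τ0^A` an involution of the partial dual `G^A`.  Then `G^A` is an even-face
graph (every `⟨τ0^A, τ1⟩`-orbit has cardinality divisible by 4) iff there exists
`o : D → Bool` with `o (τ1 f) = ¬ o f` for all `f`, `o (τ2 f) = o f` on `A` and
`o (τ0 f) = o f` off `A` — i.e. iff `A` is the union of the set of all `c`-edges and
a set of some `t`-edges arising from a crossing-total direction of `G_m`. -/
theorem evenFace_partialDual_iff_crossingTotal
    {D : Type*} [Fintype D] [Nonempty D]
    (τ0 τ1 τ2 : Equiv.Perm D)
    (h0i : ∀ f, τ0 (τ0 f) = f) (h0f : ∀ f, τ0 f ≠ f)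
    (h1i : ∀ f, τ1 (τ1 f) = f) (h1f : ∀ f, τ1 f ≠ f)
    (h2i : ∀ f, τ2 (τ2 f) = f) (h2f : ∀ f, τ2 f ≠ f)
    (hcomm : ∀ f, τ0 (τ2 f) = τ2 (τ0 f))
    (h02f : ∀ f, τ0 (τ2 f) ≠ f)
    (A : Set D) (hA0 : ∀ f ∈ A, τ0 f ∈ A) (hA2 : ∀ f ∈ A, τ2 f ∈ A)
    -- σ0 is τ0^A : agrees with τ2 on A and with τ0 on D \ A
    (σ0 : Equiv.Perm D)
    (hσ0in : ∀ f ∈ A, σ0 f = τ2 f) (hσ0out : ∀ f ∉ A, σ0 f = τ0 f) :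
    (∀ f : D, 4 ∣ Nat.card
        (MulAction.orbit (Subgroup.closure {σ0, τ1} : Subgroup (Equiv.Perm D)) f)) ↔
    (∃ o : D → Bool,
      (∀ f : D, o (τ1 f) = !o f) ∧
      (∀ f ∈ A, o (τ2 f) = o f) ∧
      (∀ f ∉ A, o (τ0 f) = o f)) := by
  have hσi : ∀ f, σ0 (σ0 f) = f := by
    intro f
    by_cases hf : f ∈ A
    · rw [hσ0in f hf, hσ0in (τ2 f) (hA2 f hf), h2i]
    · have h : τ0 f ∉ A := fun h => hf (by rw [← h0i f]; exact hA0 _ h)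
      rw [hσ0out f hf, hσ0out (τ0 f) h, h0i]
  have hσf : ∀ f, σ0 f ≠ f := by
    intro f
    by_cases hf : f ∈ A
    · rw [hσ0in f hf]; exact h2f f
    · rw [hσ0out f hf]; exact h0f f
  rw [evenFace_key σ0 τ1 hσi hσf h1i h1f]
  constructor
  · rintro ⟨o, hoa, hob⟩
    refine ⟨o, hob, fun f hf => ?_, fun f hf => ?_⟩
    · rw [← hσ0in f hf]; exact hoa f
    · rw [← hσ0out f hf]; exact hoa f
  · rintro ⟨o, hob, ho2, ho0⟩
    refine ⟨o, fun f => ?_, hob⟩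
    by_cases hf : f ∈ A
    · rw [hσ0in f hf]; exact ho2 f hf
    · rw [hσ0out f hf]; exact ho0 f hf
end

section
/- Let G = (D, τ0, τ1, τ2) be a graph-encoded map (ribbon graph) and let A, B ⊆ D each be closed under τ0 and τ2. Form the partial dual of G^A with respect to B using the involutions of G^A, i.e., let (τ0^A)^B agree with τ2^A on B and with τ0^A on D \ B, and let (τ2^A)^B agree with τ0^A on B and with τ2^A on D \ B. Then (τ0^A)^B = τ0^{A △ B} and (τ2^A)^B = τ2^{A △ B}, where △ denotes symmetric difference; that is, (G^A)^B = G^{A △ B}. -/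
/-- **Lemma (iterated partial duality and symmetric difference).**
Let `G = (D, τ0, τ1, τ2)` be a graph-encoded map and let `A, B ⊆ D` each be closed
under `τ0` and `τ2`.  Let `σ0A = τ0^A`, `σ2A = τ2^A` be the involutions of `G^A`,
let `ρ0 = (τ0^A)^B`, `ρ2 = (τ2^A)^B` be the involutions of `(G^A)^B`, and let
`π0 = τ0^{A △ B}`, `π2 = τ2^{A △ B}`.  Then `ρ0 = π0` and `ρ2 = π2`, i.e.
`(G^A)^B = G^{A △ B}`. -/
theorem partialDual_partialDual_eq_symmDiff
    {D : Type*} [Fintype D] [Nonempty D]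
    (τ0 τ1 τ2 : Equiv.Perm D)
    (h0i : ∀ f, τ0 (τ0 f) = f) (h0f : ∀ f, τ0 f ≠ f)
    (h1i : ∀ f, τ1 (τ1 f) = f) (h1f : ∀ f, τ1 f ≠ f)
    (h2i : ∀ f, τ2 (τ2 f) = f) (h2f : ∀ f, τ2 f ≠ f)
    (hcomm : ∀ f, τ0 (τ2 f) = τ2 (τ0 f))
    (h02f : ∀ f, τ0 (τ2 f) ≠ f)
    (A : Set D) (hA0 : ∀ f ∈ A, τ0 f ∈ A) (hA2 : ∀ f ∈ A, τ2 f ∈ A)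
    (B : Set D) (hB0 : ∀ f ∈ B, τ0 f ∈ B) (hB2 : ∀ f ∈ B, τ2 f ∈ B)
    -- σ0A is τ0^A, σ2A is τ2^A
    (σ0A σ2A : Equiv.Perm D)
    (hσ0Ain : ∀ f ∈ A, σ0A f = τ2 f) (hσ0Aout : ∀ f ∉ A, σ0A f = τ0 f)
    (hσ2Ain : ∀ f ∈ A, σ2A f = τ0 f) (hσ2Aout : ∀ f ∉ A, σ2A f = τ2 f)
    -- ρ0 is (τ0^A)^B, ρ2 is (τ2^A)^B : the partial dual of G^A with respect to B
    (ρ0 ρ2 : Equiv.Perm D)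
    (hρ0in : ∀ f ∈ B, ρ0 f = σ2A f) (hρ0out : ∀ f ∉ B, ρ0 f = σ0A f)
    (hρ2in : ∀ f ∈ B, ρ2 f = σ0A f) (hρ2out : ∀ f ∉ B, ρ2 f = σ2A f)
    -- π0 is τ0^{A △ B}, π2 is τ2^{A △ B}
    (π0 π2 : Equiv.Perm D)
    (hπ0in : ∀ f ∈ symmDiff A B, π0 f = τ2 f) (hπ0out : ∀ f ∉ symmDiff A B, π0 f = τ0 f)
    (hπ2in : ∀ f ∈ symmDiff A B, π2 f = τ0 f) (hπ2out : ∀ f ∉ symmDiff A B, π2 f = τ2 f) :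
    ρ0 = π0 ∧ ρ2 = π2 := by
  have hmem : ∀ f, f ∈ symmDiff A B ↔ ((f ∈ A ∧ f ∉ B) ∨ (f ∈ B ∧ f ∉ A)) := by
    intro f
    simp [symmDiff, Set.mem_union, Set.mem_diff]
  constructor <;> ext f <;>
    by_cases hB : f ∈ B <;> by_cases hA : f ∈ A
  · rw [hρ0in f hB, hσ2Ain f hA, hπ0out f (by rw [hmem]; tauto)]
  · rw [hρ0in f hB, hσ2Aout f hA, hπ0in f (by rw [hmem]; tauto)]
  · rw [hρ0out f hB, hσ0Ain f hA, hπ0in f (by rw [hmem]; tauto)]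
  · rw [hρ0out f hB, hσ0Aout f hA, hπ0out f (by rw [hmem]; tauto)]
  · rw [hρ2in f hB, hσ0Ain f hA, hπ2out f (by rw [hmem]; tauto)]
  · rw [hρ2in f hB, hσ0Aout f hA, hπ2in f (by rw [hmem]; tauto)]
  · rw [hρ2out f hB, hσ2Ain f hA, hπ2in f (by rw [hmem]; tauto)]
  · rw [hρ2out f hB, hσ2Aout f hA, hπ2out f (by rw [hmem]; tauto)]
end

section
/- Let G = (D, τ0, τ1, τ2) be a graph-encoded map (ribbon graph) and let A ⊆ D be closed under τ0 and τ2. Then G is orientable if and only if the partial dual G^A is orientable; explicitly, there exists ε : D → Bool with ε(τ0 f) = ¬ε(f), ε(τ1 f) = ¬ε(f) and ε(τ2 f) = ¬ε(f) for every flag f if and only if there exists ε' : D → Bool with ε'(τ0^A f) = ¬ε'(f), ε'(τ1 f) = ¬ε'(f) and ε'(τ2^A f) = ¬ε'(f) for every flag f. -/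
/-- **Theorem (partial duality preserves orientability).**
Let `G = (D, τ0, τ1, τ2)` be a graph-encoded map, `A ⊆ D` closed under `τ0` and `τ2`,
and `σ0 = τ0^A`, `σ2 = τ2^A` the involutions of the partial dual `G^A`.  Then `G` is
orientable iff `G^A` is orientable. -/
theorem orientable_iff_partialDual_orientable
    {D : Type*} [Fintype D] [Nonempty D]
    (τ0 τ1 τ2 : Equiv.Perm D)
    (h0i : ∀ f, τ0 (τ0 f) = f) (h0f : ∀ f, τ0 f ≠ f)
    (h1i : ∀ f, τ1 (τ1 f) = f) (h1f : ∀ f, τ1 f ≠ f)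
    (h2i : ∀ f, τ2 (τ2 f) = f) (h2f : ∀ f, τ2 f ≠ f)
    (hcomm : ∀ f, τ0 (τ2 f) = τ2 (τ0 f))
    (h02f : ∀ f, τ0 (τ2 f) ≠ f)
    (A : Set D) (hA0 : ∀ f ∈ A, τ0 f ∈ A) (hA2 : ∀ f ∈ A, τ2 f ∈ A)
    -- σ0 is τ0^A, σ2 is τ2^A
    (σ0 σ2 : Equiv.Perm D)
    (hσ0in : ∀ f ∈ A, σ0 f = τ2 f) (hσ0out : ∀ f ∉ A, σ0 f = τ0 f)
    (hσ2in : ∀ f ∈ A, σ2 f = τ0 f) (hσ2out : ∀ f ∉ A, σ2 f = τ2 f) :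
    (∃ ε : D → Bool, ∀ f,
      ε (τ0 f) = !ε f ∧ ε (τ1 f) = !ε f ∧ ε (τ2 f) = !ε f) ↔
    (∃ ε' : D → Bool, ∀ f,
      ε' (σ0 f) = !ε' f ∧ ε' (τ1 f) = !ε' f ∧ ε' (σ2 f) = !ε' f) := by
  constructor
  · rintro ⟨ε, hε⟩
    refine ⟨ε, fun f => ?_⟩
    obtain ⟨h0, h1, h2⟩ := hε f
    by_cases hf : f ∈ A
    · rw [hσ0in f hf, hσ2in f hf]; exact ⟨h2, h1, h0⟩
    · rw [hσ0out f hf, hσ2out f hf]; exact ⟨h0, h1, h2⟩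
  · rintro ⟨ε, hε⟩
    refine ⟨ε, fun f => ?_⟩
    obtain ⟨h0, h1, h2⟩ := hε f
    by_cases hf : f ∈ A
    · rw [hσ0in f hf] at h0; rw [hσ2in f hf] at h2
      exact ⟨h2, h1, h0⟩
    · rw [hσ0out f hf] at h0; rw [hσ2out f hf] at h2
      exact ⟨h0, h1, h2⟩
end

section
/- Let G = (D, τ0, τ1, τ2) be a graph-encoded map (ribbon graph) and let A ⊆ D be closed under τ0 and τ2. Then τ0^A and τ2^A are fixed-point-free involutions of D, they commute, and τ0^A ∘ τ2^A = τ0 ∘ τ2 (in particular τ0^A ∘ τ2^A is fixed-point-free); moreover the orbits of the subgroup generated by {τ0^A, τ2^A} coincide with the orbits of the subgroup generated by {τ0, τ2}. Hence the partial dual G^A = (D, τ0^A, τ1, τ2^A) is again a graph-encoded map, with the same edges as G. -/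
private lemma orbit_eq_quad_aux {D : Type*} (a b : Equiv.Perm D)
    (ha : ∀ x, a (a x) = x) (hb : ∀ x, b (b x) = x)
    (E : Set D) (f : D) (hf : f ∈ E)
    (hEa : ∀ x ∈ E, a x ∈ E) (hEb : ∀ x ∈ E, b x ∈ E)
    (hsub : E ⊆ MulAction.orbit (Subgroup.closure {a, b} : Subgroup (Equiv.Perm D)) f) :
    MulAction.orbit (Subgroup.closure {a, b} : Subgroup (Equiv.Perm D)) f = E := by
  have hainv : a⁻¹ = a := by
    ext x; rw [Equiv.Perm.inv_def, Equiv.symm_apply_eq, ha]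
  have hbinv : b⁻¹ = b := by
    ext x; rw [Equiv.Perm.inv_def, Equiv.symm_apply_eq, hb]
  apply le_antisymm ?_ hsub
  rintro x ⟨⟨g, hg⟩, rfl⟩
  have key : ∀ g ∈ (Subgroup.closure {a, b} : Subgroup (Equiv.Perm D)),
      (∀ x ∈ E, g x ∈ E) ∧ (∀ x ∈ E, g⁻¹ x ∈ E) := by
    intro g hg
    refine Subgroup.closure_induction ?_ ?_ ?_ ?_ hg
    · rintro x (rfl | rfl)
      · exact ⟨hEa, by rw [hainv]; exact hEa⟩
      · exact ⟨hEb, by rw [hbinv]; exact hEb⟩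
    · simp
    · rintro x y hx hy ⟨hx1, hx2⟩ ⟨hy1, hy2⟩
      refine ⟨fun z hz => ?_, fun z hz => ?_⟩
      · simpa using hx1 _ (hy1 z hz)
      · simpa [mul_inv_rev] using hy2 _ (hx2 z hz)
    · rintro x hx ⟨hx1, hx2⟩
      exact ⟨hx2, by simpa using hx1⟩
  exact (key g hg).1 f hf

/-- **Lemma (the partial dual is again a graph-encoded map).**
Let `G = (D, τ0, τ1, τ2)` be a graph-encoded map and `A ⊆ D` closed under `τ0` and
`τ2`.  Define `σ0 = τ0^A` and `σ2 = τ2^A` pointwise.  Then `σ0` and `σ2` are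
fixed-point-free involutions (in particular bijections), they commute, and
`σ0 ∘ σ2 = τ0 ∘ τ2`, which is fixed-point-free; moreover the orbits of `⟨σ0, σ2⟩`
coincide with the orbits of `⟨τ0, τ2⟩`, i.e. the partial dual
`G^A = (D, τ0^A, τ1, τ2^A)` is again a graph-encoded map with the same edges as `G`. -/
theorem partialDual_is_graphEncodedMap
    {D : Type*} [Fintype D] [Nonempty D]
    (τ0 τ1 τ2 : Equiv.Perm D)
    (h0i : ∀ f, τ0 (τ0 f) = f) (h0f : ∀ f, τ0 f ≠ f)
    (h1i : ∀ f, τ1 (τ1 f) = f) (h1f : ∀ f, τ1 f ≠ f)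
    (h2i : ∀ f, τ2 (τ2 f) = f) (h2f : ∀ f, τ2 f ≠ f)
    (hcomm : ∀ f, τ0 (τ2 f) = τ2 (τ0 f))
    (h02f : ∀ f, τ0 (τ2 f) ≠ f)
    (A : Set D) (hA0 : ∀ f ∈ A, τ0 f ∈ A) (hA2 : ∀ f ∈ A, τ2 f ∈ A)
    -- σ0 is τ0^A and σ2 is τ2^A, as plain functions
    (σ0 σ2 : D → D)
    (hσ0in : ∀ f ∈ A, σ0 f = τ2 f) (hσ0out : ∀ f ∉ A, σ0 f = τ0 f)
    (hσ2in : ∀ f ∈ A, σ2 f = τ0 f) (hσ2out : ∀ f ∉ A, σ2 f = τ2 f) :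
    Function.Involutive σ0 ∧ (∀ f, σ0 f ≠ f) ∧
    Function.Involutive σ2 ∧ (∀ f, σ2 f ≠ f) ∧
    (∀ f, σ0 (σ2 f) = σ2 (σ0 f)) ∧
    (∀ f, σ0 (σ2 f) = τ0 (τ2 f)) ∧
    (∀ f, σ0 (σ2 f) ≠ f) ∧
    -- the ⟨σ0, σ2⟩-orbits coincide with the ⟨τ0, τ2⟩-orbits (the edges of G)
    (∀ p0 p2 : Equiv.Perm D, (∀ f, p0 f = σ0 f) → (∀ f, p2 f = σ2 f) →
      ∀ f : D,
        MulAction.orbit (Subgroup.closure {p0, p2} : Subgroup (Equiv.Perm D)) f =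
        MulAction.orbit (Subgroup.closure {τ0, τ2} : Subgroup (Equiv.Perm D)) f) := by
  have hA0' : ∀ f, f ∉ A → τ0 f ∉ A := fun f hf h => hf (by rw [← h0i f]; exact hA0 _ h)
  have hA2' : ∀ f, f ∉ A → τ2 f ∉ A := fun f hf h => hf (by rw [← h2i f]; exact hA2 _ h)
  have hs0inv : Function.Involutive σ0 := by
    intro f
    by_cases hf : f ∈ A
    · rw [hσ0in f hf, hσ0in _ (hA2 f hf), h2i]
    · rw [hσ0out f hf, hσ0out _ (hA0' f hf), h0i]
  have hs2inv : Function.Involutive σ2 := by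
    intro f
    by_cases hf : f ∈ A
    · rw [hσ2in f hf, hσ2in _ (hA0 f hf), h0i]
    · rw [hσ2out f hf, hσ2out _ (hA2' f hf), h2i]
  have hs0f : ∀ f, σ0 f ≠ f := by
    intro f
    by_cases hf : f ∈ A
    · rw [hσ0in f hf]; exact h2f f
    · rw [hσ0out f hf]; exact h0f f
  have hs2f : ∀ f, σ2 f ≠ f := by
    intro f
    by_cases hf : f ∈ A
    · rw [hσ2in f hf]; exact h0f f
    · rw [hσ2out f hf]; exact h2f f
  have h02 : ∀ f, σ0 (σ2 f) = τ0 (τ2 f) := by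
    intro f
    by_cases hf : f ∈ A
    · rw [hσ2in f hf, hσ0in _ (hA0 f hf), ← hcomm]
    · rw [hσ2out f hf, hσ0out _ (hA2' f hf)]
  have hσcomm : ∀ f, σ0 (σ2 f) = σ2 (σ0 f) := by
    intro f
    rw [h02]
    by_cases hf : f ∈ A
    · rw [hσ0in f hf, hσ2in _ (hA2 f hf), hcomm]
    · rw [hσ0out f hf, hσ2out _ (hA0' f hf), hcomm]
  refine ⟨hs0inv, hs0f, hs2inv, hs2f, hσcomm, h02, fun f => (h02 f) ▸ h02f f, ?_⟩
  intro p0 p2 hp0 hp2 f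
  set E : Set D := {f, τ0 f, τ2 f, τ0 (τ2 f)} with hE
  have hfE : f ∈ E := Or.inl rfl
  have hEτ0 : ∀ x ∈ E, τ0 x ∈ E := by
    rintro x (rfl | rfl | rfl | rfl)
    · exact Or.inr (Or.inl rfl)
    · exact Or.inl (h0i f)
    · exact Or.inr (Or.inr (Or.inr rfl))
    · exact Or.inr (Or.inr (Or.inl (h0i (τ2 f))))
  have hEτ2 : ∀ x ∈ E, τ2 x ∈ E := by
    rintro x (rfl | rfl | rfl | rfl)
    · exact Or.inr (Or.inr (Or.inl rfl))
    · exact Or.inr (Or.inr (Or.inr (hcomm f).symm))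
    · exact Or.inl (h2i f)
    · exact Or.inr (Or.inl (by rw [← hcomm, h2i]))
  have hEp0 : ∀ x ∈ E, p0 x ∈ E := by
    intro x hx
    rw [hp0 x]
    by_cases h : x ∈ A
    · rw [hσ0in x h]; exact hEτ2 x hx
    · rw [hσ0out x h]; exact hEτ0 x hx
  have hEp2 : ∀ x ∈ E, p2 x ∈ E := by
    intro x hx
    rw [hp2 x]
    by_cases h : x ∈ A
    · rw [hσ2in x h]; exact hEτ0 x hx
    · rw [hσ2out x h]; exact hEτ2 x hx
  have hp0i : ∀ x, p0 (p0 x) = x := by intro x; rw [hp0, hp0]; exact hs0inv x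
  have hp2i : ∀ x, p2 (p2 x) = x := by intro x; rw [hp2, hp2]; exact hs2inv x
  have hmemτ0 : τ0 ∈ (Subgroup.closure {τ0, τ2} : Subgroup (Equiv.Perm D)) :=
    Subgroup.subset_closure (Or.inl rfl)
  have hmemτ2 : τ2 ∈ (Subgroup.closure {τ0, τ2} : Subgroup (Equiv.Perm D)) :=
    Subgroup.subset_closure (Or.inr rfl)
  have hmemp0 : p0 ∈ (Subgroup.closure {p0, p2} : Subgroup (Equiv.Perm D)) :=
    Subgroup.subset_closure (Or.inl rfl)
  have hmemp2 : p2 ∈ (Subgroup.closure {p0, p2} : Subgroup (Equiv.Perm D)) :=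
    Subgroup.subset_closure (Or.inr rfl)
  have hsubτ : E ⊆ MulAction.orbit (Subgroup.closure {τ0, τ2} : Subgroup (Equiv.Perm D)) f := by
    rintro x (rfl | rfl | rfl | rfl)
    · exact ⟨1, by simp⟩
    · exact ⟨⟨τ0, hmemτ0⟩, rfl⟩
    · exact ⟨⟨τ2, hmemτ2⟩, rfl⟩
    · exact ⟨⟨τ0 * τ2, mul_mem hmemτ0 hmemτ2⟩, rfl⟩
  have hsubp : E ⊆ MulAction.orbit (Subgroup.closure {p0, p2} : Subgroup (Equiv.Perm D)) f := by
    have h4 : τ0 (τ2 f) = p0 (p2 f) := by rw [hp0, hp2, h02]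
    by_cases hf : f ∈ A
    · rintro x (rfl | rfl | rfl | rfl)
      · exact ⟨1, by simp⟩
      · exact ⟨⟨p2, hmemp2⟩, by show p2 f = τ0 f; rw [hp2, hσ2in f hf]⟩
      · exact ⟨⟨p0, hmemp0⟩, by show p0 f = τ2 f; rw [hp0, hσ0in f hf]⟩
      · exact ⟨⟨p0 * p2, mul_mem hmemp0 hmemp2⟩, h4.symm⟩
    · rintro x (rfl | rfl | rfl | rfl)
      · exact ⟨1, by simp⟩
      · exact ⟨⟨p0, hmemp0⟩, by show p0 f = τ0 f; rw [hp0, hσ0out f hf]⟩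
      · exact ⟨⟨p2, hmemp2⟩, by show p2 f = τ2 f; rw [hp2, hσ2out f hf]⟩
      · exact ⟨⟨p0 * p2, mul_mem hmemp0 hmemp2⟩, h4.symm⟩
  rw [orbit_eq_quad_aux p0 p2 hp0i hp2i E f hfE hEp0 hEp2 hsubp,
    orbit_eq_quad_aux τ0 τ2 h0i h2i E f hfE hEτ0 hEτ2 hsubτ]
end

section
/- Let G = (D, τ0, τ1, τ2) be a graph-encoded map (ribbon graph) and let N be the number of crossing-total directions of its medial graph G_m, i.e., the number of functions o : D → Bool with o(τ1 f) = ¬o(f) for all f ∈ D such that for every edge e of G either o(τ0 f) = o(f) for all flags f of e or o(τ2 f) = o(f) for all flags f of e. Then 2^w ≤ N ≤ Σ_A 2^{c(A)}, where w is the number of orbits on D of the subgroup generated by {τ1, τ0∘τ2} (the number of straight-ahead closed walks of G_m), the sum ranges over all subsets A ⊆ D closed under τ0 and τ2 such that every orbit of the subgroup generated by {τ1, τ2^A} has cardinality divisible by 4 (the even states of G), and c(A) is the number of orbits of the subgroup generated by {τ1, τ2^A} (the number of state circles). -/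
/-!
Upper bound: a crossing-total direction `o` determines the state `A = {f | o (τ0 f) = o f}`,
and on the edges outside `A` it is `τ2`-invariant, so `o` is reversed by `τ1` and invariant
under `τ2^A`. On a state circle, `τ1` then exchanges the flags where `o` is true with those
where it is false, and the fixed-point-free involution `τ2^A` pairs up the former: the state
is even. Moreover `o` is determined by its values at one flag of each state circle.

Lower bound: `σ = τ1` and `π = τ0 τ2` are fixed-point-free involutions, so `σ` normalises
`⟨σπ⟩` and permutes the `⟨σπ⟩`-orbits without fixing any (an orbit containing `x` and `σ x`
would contain a fixed point of `σ` or of `π` halfway between them), while `π` permutes them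
as `σ` does. Choosing one orbit of each swapped pair gives a `p` reversed by `σ` and `π`, and
`p` xor any function constant on the `⟨σ, π⟩`-orbits is again reversed by both. Every such
function is crossing-total, because `o (τ0 g) = o g` is then constant along each edge.
-/

open scoped Classical

/-- The permutation `τ2^A` of the flags: it agrees with `τ0` on `A` and with `τ2`
off `A`.  When `A` is closed under the commuting fixed-point-free involutions `τ0`
and `τ2`, this is again an involution, hence a permutation. -/
noncomputable def partialDualPerm {D : Type*} (τ0 τ2 : Equiv.Perm D)
    (h0 : ∀ f, τ0 (τ0 f) = f) (h2 : ∀ f, τ2 (τ2 f) = f)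
    (A : Set D) (hA0 : ∀ f ∈ A, τ0 f ∈ A) (hA2 : ∀ f ∈ A, τ2 f ∈ A) :
    Equiv.Perm D :=
  Function.Involutive.toPerm (fun f => if f ∈ A then τ0 f else τ2 f) (by
    intro f
    by_cases hf : f ∈ A
    · simp only [if_pos hf, if_pos (hA0 f hf), h0]
    · have h2f : τ2 f ∉ A := fun h => hf (by
        have := hA2 _ h
        rwa [h2 f] at this)
      simp only [if_neg hf, if_neg h2f, h2])

open Equiv MulAction Subgroup Function

section

variable {D : Type*}

theorem iff_of_mem_orbit_closure {S : Set (Perm D)} {P : D → Prop}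
    (hS : ∀ σ ∈ S, ∀ x, P (σ x) ↔ P x) {x y : D} (hy : y ∈ orbit (closure S) x) :
    P y ↔ P x := by
  obtain ⟨⟨g, hg⟩, rfl⟩ := hy
  suffices h : ∀ x, P (g x) ↔ P x from h x
  induction hg using closure_induction with
  | mem σ hσ => exact hS σ hσ
  | one => exact fun _ => Iff.rfl
  | mul g h _ _ ihg ihh => exact fun x => (ihg (h x)).trans (ihh x)
  | inv g _ ih => exact fun x => by simpa using (ih (g⁻¹ x)).symm

theorem two_dvd_card_of_involutive {s : Finset D} {π : D → D} (hπ : Involutive π)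
    (hπfix : ∀ x, π x ≠ x) (hs : ∀ x ∈ s, π x ∈ s) : 2 ∣ s.card := by
  have : ∑ _x ∈ s, (1 : ZMod 2) = 0 :=
    Finset.sum_involution (fun x _ => π x) (fun _ _ => by decide) (fun x _ _ => hπfix x) hs
      (fun x _ => hπ x)
  simpa [ZMod.natCast_eq_zero_iff] using this

theorem four_dvd_card_of_flip_of_invariant {s : Finset D} {σ π : Perm D} (hπ : Involutive π)
    (hπfix : ∀ x, π x ≠ x) (hσs : ∀ x ∈ s, σ x ∈ s) (hπs : ∀ x ∈ s, π x ∈ s)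
    {o : D → Bool} (hoσ : ∀ x, o (σ x) = !o x) (hoπ : ∀ x, o (π x) = o x) :
    4 ∣ s.card := by
  set t := s.filter (o · = true)
  set u := s.filter (o · = false)
  have hσtu : ∀ x ∈ t, σ x ∈ u := fun x hx => by simp_all [t, u]
  have hσut : ∀ x ∈ u, σ x ∈ t := fun x hx => by simp_all [t, u]
  have htu : t.card = u.card :=
    le_antisymm (Finset.card_le_card_of_injOn σ hσtu σ.injective.injOn)
      (Finset.card_le_card_of_injOn σ hσut σ.injective.injOn)
  have ht : 2 ∣ t.card :=
    two_dvd_card_of_involutive hπ hπfix fun x hx => by simp_all [t]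
  have hs : s.card = t.card + u.card := by
    simpa [t, u] using (Finset.card_filter_add_card_filter_not (s := s) (o · = true)).symm
  omega

theorem card_flip_invariant_le [Finite D] (σ π : Perm D) :
    Nat.card {o : D → Bool // (∀ x, o (σ x) = !o x) ∧ ∀ x, o (π x) = o x} ≤
      2 ^ Nat.card (orbitRel.Quotient (closure {σ, π}) D) := by
  have hinj : Injective fun (o : {o : D → Bool // (∀ x, o (σ x) = !o x) ∧ ∀ x, o (π x) = o x})
      (q : orbitRel.Quotient (closure {σ, π}) D) => o.1 q.out := by
    rintro ⟨o, hoσ, hoπ⟩ ⟨o', ho'σ, ho'π⟩ h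
    ext x
    have hx : x ∈ orbit (closure {σ, π}) (Quotient.mk'' x : orbitRel.Quotient _ D).out :=
      orbitRel_apply.mp (Quotient.exact' (Quotient.out_eq' _).symm)
    refine (iff_of_mem_orbit_closure (P := fun x => o x = o' x) ?_ hx).mpr (congrFun h _)
    rintro τ (rfl | rfl) y
    · simp [hoσ, ho'σ]
    · simp [hoπ, ho'π]
  simpa [Nat.card_fun] using Nat.card_le_card_of_injective _ hinj

theorem card_flip_invariant_le_ite [Fintype D] (σ π : Perm D) (hπ : Involutive π)
    (hπfix : ∀ x, π x ≠ x) :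
    Nat.card {o : D → Bool // (∀ x, o (σ x) = !o x) ∧ ∀ x, o (π x) = o x} ≤
      if ∀ f : D, 4 ∣ Nat.card (orbit (closure {σ, π}) f)
      then 2 ^ Nat.card (orbitRel.Quotient (closure {σ, π}) D) else 0 := by
  rcases isEmpty_or_nonempty
    {o : D → Bool // (∀ x, o (σ x) = !o x) ∧ ∀ x, o (π x) = o x} with h | ⟨⟨o, hoσ, hoπ⟩⟩
  · simp
  rw [if_pos fun f => ?_]
  · exact card_flip_invariant_le σ π
  have hclosed : ∀ τ ∈ ({σ, π} : Set (Perm D)), ∀ x ∈ (orbit (closure {σ, π}) f).toFinset,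
      τ x ∈ (orbit (closure {σ, π}) f).toFinset := by
    intro τ hτ x hx
    rw [Set.mem_toFinset] at hx ⊢
    exact mem_orbit_of_mem_orbit (⟨τ, subset_closure hτ⟩ : closure ({σ, π} : Set (Perm D))) hx
  rw [Nat.card_eq_card_toFinset]
  exact four_dvd_card_of_flip_of_invariant hπ hπfix (hclosed σ (by simp)) (hclosed π (by simp))
    hoσ hoπ

theorem exists_bool_flip {α : Type*} {s : α → α} (hs : Involutive s) (hsfix : ∀ a, s a ≠ a) :
    ∃ q : α → Bool, ∀ a, q (s a) = !q a := by
  let := linearOrderOfSTO (WellOrderingRel (α := α))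
  refine ⟨fun a => decide (a < s a), fun a => ?_⟩
  simp only [hs a]
  rcases (hsfix a).lt_or_gt with h | h <;> simp [h, h.le]

theorem mul_zpow_mul_eq_zpow_neg_mul {G : Type*} [Group G] {a b : G} (ha : a * a = 1)
    (hb : b * b = 1) (k : ℤ) : a * (a * b) ^ k = (a * b) ^ (-k) * a := by
  have ha' : a⁻¹ = a := inv_eq_of_mul_eq_one_right ha
  have hconj : a * (a * b) * a⁻¹ = (a * b)⁻¹ := by
    rw [mul_inv_rev, inv_eq_of_mul_eq_one_right hb, ha', ← mul_assoc, ha, one_mul]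
  calc a * (a * b) ^ k = (a * (a * b) * a⁻¹) ^ k * a := by rw [conj_zpow]; group
    _ = (a * b) ^ (-k) * a := by rw [hconj, inv_zpow']

theorem mem_orbit_zpowers_iff {G α : Type*} [Group G] [MulAction G α] {g : G} {x y : α} :
    y ∈ orbit (zpowers g) x ↔ ∃ k : ℤ, g ^ k • x = y := by
  constructor
  · rintro ⟨⟨h, hh⟩, rfl⟩
    obtain ⟨k, rfl⟩ := mem_zpowers_iff.mp hh
    exact ⟨k, rfl⟩
  · rintro ⟨k, rfl⟩
    exact ⟨⟨g ^ k, zpow_mem (mem_zpowers g) k⟩, rfl⟩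

section Dihedral

variable {σ π : Perm D} (hσ : Involutive σ) (hπ : Involutive π)
include hσ hπ

theorem apply_mul_zpow_apply (k : ℤ) (x : D) :
    σ (((σ * π) ^ k) x) = ((σ * π) ^ (-k)) (σ x) :=
  congrArg (· x) (mul_zpow_mul_eq_zpow_neg_mul (Equiv.ext hσ) (Equiv.ext hπ) k)

theorem zpow_apply_ne_apply (hσfix : ∀ x, σ x ≠ x) (hπfix : ∀ x, π x ≠ x) (k : ℤ) (x : D) :
    ((σ * π) ^ k) x ≠ σ x := by
  have hadd (i j : ℤ) (y : D) : ((σ * π) ^ i) (((σ * π) ^ j) y) = ((σ * π) ^ (i + j)) y := by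
    rw [zpow_add, Perm.mul_apply]
  intro h
  obtain ⟨d, rfl | rfl⟩ := Int.even_or_odd' k
  · apply hσfix (((σ * π) ^ d) x)
    rw [apply_mul_zpow_apply hσ hπ, ← h, hadd]
    congr 2
    ring
  · apply hπfix (((σ * π) ^ d) x)
    calc π (((σ * π) ^ d) x) = σ (((σ * π) ^ (1 + d)) x) := by
          rw [← hadd 1 d, zpow_one, Perm.mul_apply, hσ]
      _ = ((σ * π) ^ (-(1 + d))) (((σ * π) ^ (2 * d + 1)) x) := by
          rw [apply_mul_zpow_apply hσ hπ, h]
      _ = ((σ * π) ^ d) x := by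
          rw [hadd]
          congr 2
          ring

theorem exists_flip_flip (hσfix : ∀ x, σ x ≠ x) (hπfix : ∀ x, π x ≠ x) :
    ∃ p : D → Bool, (∀ x, p (σ x) = !p x) ∧ ∀ x, p (π x) = !p x := by
  let σbar : orbitRel.Quotient (zpowers (σ * π)) D → orbitRel.Quotient (zpowers (σ * π)) D :=
    Quotient.map' σ fun x y hxy => by
      obtain ⟨k, rfl⟩ := mem_orbit_zpowers_iff.mp (orbitRel_apply.mp hxy)
      exact orbitRel_apply.mpr
        (mem_orbit_zpowers_iff.mpr ⟨-k, (apply_mul_zpow_apply hσ hπ k y).symm⟩)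
  have hσbar : Involutive σbar := fun c =>
    Quotient.inductionOn' c fun x => congrArg Quotient.mk'' (hσ x)
  have hσbarfix : ∀ c, σbar c ≠ c := fun c =>
    Quotient.inductionOn' c fun x h => by
      obtain ⟨k, hk⟩ := mem_orbit_zpowers_iff.mp (orbitRel_apply.mp (Quotient.exact' h))
      exact zpow_apply_ne_apply hσ hπ hσfix hπfix k x hk
  obtain ⟨q, hq⟩ := exists_bool_flip hσbar hσbarfix
  refine ⟨fun x => q (Quotient.mk'' x), fun x => hq (Quotient.mk'' x), fun x => ?_⟩
  have hmk : (Quotient.mk'' ((σ * π) x) : orbitRel.Quotient (zpowers (σ * π)) D) =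
      Quotient.mk'' x :=
    Quotient.sound' (mem_orbit x (⟨σ * π, mem_zpowers _⟩ : zpowers (σ * π)))
  have hπx : π x = σ ((σ * π) x) := by rw [Perm.mul_apply, hσ]
  calc q (Quotient.mk'' (π x)) = q (σbar (Quotient.mk'' ((σ * π) x))) := by rw [hπx]; rfl
    _ = !q (Quotient.mk'' x) := by rw [hmk, hq]

theorem two_pow_card_orbits_le_card_flip_flip [Finite D] (hσfix : ∀ x, σ x ≠ x)
    (hπfix : ∀ x, π x ≠ x) :
    2 ^ Nat.card (orbitRel.Quotient (closure {σ, π}) D) ≤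
      Nat.card {o : D → Bool // (∀ x, o (σ x) = !o x) ∧ ∀ x, o (π x) = !o x} := by
  obtain ⟨p, hpσ, hpπ⟩ := exists_flip_flip hσ hπ hσfix hπfix
  have hmk : ∀ τ ∈ ({σ, π} : Set (Perm D)), ∀ x,
      (Quotient.mk'' (τ x) : orbitRel.Quotient (closure {σ, π}) D) = Quotient.mk'' x :=
    fun τ hτ x => Quotient.sound' (mem_orbit x (⟨τ, subset_closure hτ⟩ : closure {σ, π}))
  let F (s : orbitRel.Quotient (closure {σ, π}) D → Bool) :
      {o : D → Bool // (∀ x, o (σ x) = !o x) ∧ ∀ x, o (π x) = !o x} :=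
    ⟨fun x => s (Quotient.mk'' x) ^^ p x,
      fun x => by simp [hmk σ (by simp), hpσ], fun x => by simp [hmk π (by simp), hpπ]⟩
  have hF : Injective F := fun s s' h => funext fun c => by
    induction c using Quotient.inductionOn' with
    | h x => simpa [F] using congrFun (congrArg Subtype.val h) x
  simpa [Nat.card_fun] using Nat.card_le_card_of_injective F hF

end Dihedral

def IsCrossingTotal (τ0 τ1 τ2 : Perm D) (o : D → Bool) : Prop :=
  (∀ f : D, o (τ1 f) = !o f) ∧
  ∀ f : D,
    (∀ g ∈ orbit (closure {τ0, τ2} : Subgroup (Perm D)) f, o (τ0 g) = o g) ∨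
    (∀ g ∈ orbit (closure {τ0, τ2} : Subgroup (Perm D)) f, o (τ2 g) = o g)

def stateOf (τ0 : Perm D) (o : D → Bool) : Set D := {f | o (τ0 f) = o f}

section PartialDual

variable {τ0 τ2 : Perm D} (h0i : ∀ f, τ0 (τ0 f) = f) (h2i : ∀ f, τ2 (τ2 f) = f) {A : Set D}
  (hA0 : ∀ f ∈ A, τ0 f ∈ A) (hA2 : ∀ f ∈ A, τ2 f ∈ A)

theorem partialDualPerm_involutive : Involutive (partialDualPerm τ0 τ2 h0i h2i A hA0 hA2) :=
  (partialDualPerm τ0 τ2 h0i h2i A hA0 hA2).apply_symm_apply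

theorem partialDualPerm_apply_ne (h0f : ∀ f, τ0 f ≠ f) (h2f : ∀ f, τ2 f ≠ f) (x : D) :
    partialDualPerm τ0 τ2 h0i h2i A hA0 hA2 x ≠ x := by
  change (if x ∈ A then τ0 x else τ2 x) ≠ x
  split_ifs
  exacts [h0f x, h2f x]

end PartialDual

section CrossingTotal

variable {τ0 τ1 τ2 : Perm D} (h0i : Involutive τ0) (hcomm : ∀ f, τ0 (τ2 f) = τ2 (τ0 f))

include h0i hcomm in
theorem isCrossingTotal_of_flip_flip {o : D → Bool} (ho1 : ∀ x, o (τ1 x) = !o x)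
    (ho02 : ∀ x, o (τ0 (τ2 x)) = !o x) : IsCrossingTotal τ0 τ1 τ2 o := by
  have ho2 (x : D) : o (τ2 x) = !o (τ0 x) := by
    simpa [hcomm, h0i x] using ho02 (τ0 x)
  have hP : ∀ τ ∈ ({τ0, τ2} : Set (Perm D)), ∀ x, o (τ0 (τ x)) = o (τ x) ↔ o (τ0 x) = o x := by
    rintro τ (rfl | rfl) x
    · rw [h0i, eq_comm]
    · simp only [ho02, ho2, Bool.not_inj_iff]
      exact eq_comm
  refine ⟨ho1, fun f => ?_⟩
  have hinv : ∀ g ∈ orbit (closure {τ0, τ2} : Subgroup (Perm D)) f,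
      o (τ0 g) = o g ↔ o (τ0 f) = o f :=
    fun g hg => iff_of_mem_orbit_closure (P := fun x => o (τ0 x) = o x) hP hg
  by_cases hf : o (τ0 f) = o f
  · exact Or.inl fun g hg => (hinv g hg).mpr hf
  · refine Or.inr fun g hg => ?_
    have hg' : o (τ0 g) ≠ o g := mt (hinv g hg).mp hf
    rw [ho2]
    exact (Bool.eq_not.mpr hg'.symm).symm

include h0i in
theorem mapsTo_stateOf (o : D → Bool) : Set.MapsTo τ0 (stateOf τ0 o) (stateOf τ0 o) :=
  fun f hf => by
    simp only [stateOf, Set.mem_ofPred_eq, h0i f] at hf ⊢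
    exact hf.symm

include hcomm in
theorem IsCrossingTotal.mapsTo_stateOf {o : D → Bool} (ho : IsCrossingTotal τ0 τ1 τ2 o) :
    Set.MapsTo τ2 (stateOf τ0 o) (stateOf τ0 o) := fun f hf => by
  have hmem (τ : Perm D) (hτ : τ ∈ ({τ0, τ2} : Set (Perm D))) :
      τ f ∈ orbit (closure {τ0, τ2} : Subgroup (Perm D)) f :=
    mem_orbit f (⟨τ, subset_closure hτ⟩ : closure {τ0, τ2})
  simp only [stateOf, Set.mem_ofPred_eq] at hf ⊢
  rcases ho.2 f with h | h
  · exact h _ (hmem τ2 (by simp))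
  · rw [hcomm, h _ (hmem τ0 (by simp)), hf, h f (mem_orbit_self f)]

include h0i in
theorem IsCrossingTotal.apply_partialDualPerm_stateOf (h2i : Involutive τ2) {o : D → Bool}
    (ho : IsCrossingTotal τ0 τ1 τ2 o) (hA0 : ∀ f ∈ stateOf τ0 o, τ0 f ∈ stateOf τ0 o)
    (hA2 : ∀ f ∈ stateOf τ0 o, τ2 f ∈ stateOf τ0 o) (x : D) :
    o (partialDualPerm τ0 τ2 h0i h2i (stateOf τ0 o) hA0 hA2 x) = o x := by
  change o (if x ∈ stateOf τ0 o then τ0 x else τ2 x) = o x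
  split_ifs with hx
  · exact hx
  · exact (ho.2 x).resolve_left (fun h => hx (h x (mem_orbit_self x))) x (mem_orbit_self x)

include h0i hcomm in
theorem two_pow_card_orbits_le_card_isCrossingTotal [Finite D] (h1i : Involutive τ1)
    (h1f : ∀ f, τ1 f ≠ f) (h2i : Involutive τ2) (h02f : ∀ f, τ0 (τ2 f) ≠ f) :
    2 ^ Nat.card (orbitRel.Quotient (closure {τ1, τ0 * τ2}) D) ≤
      Nat.card {o // IsCrossingTotal τ0 τ1 τ2 o} := by
  have h02i : Involutive (τ0 * τ2) := fun f => by simp [hcomm, h0i f, h2i f]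
  refine (two_pow_card_orbits_le_card_flip_flip h1i h02i h1f h02f).trans ?_
  exact Nat.card_le_card_of_injective
    (fun o => ⟨o.1, isCrossingTotal_of_flip_flip h0i hcomm o.2.1 o.2.2⟩)
    (Injective.of_comp (f := Subtype.val) Subtype.val_injective)

include h0i hcomm in
theorem card_isCrossingTotal_le_sum [Fintype D] (h2i : Involutive τ2) :
    Nat.card {o // IsCrossingTotal τ0 τ1 τ2 o} ≤
      ∑ A : {A : Set D // (∀ f ∈ A, τ0 f ∈ A) ∧ (∀ f ∈ A, τ2 f ∈ A)},
        Nat.card {o : D → Bool // (∀ x, o (τ1 x) = !o x) ∧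
          ∀ x, o (partialDualPerm τ0 τ2 h0i h2i A.1 A.2.1 A.2.2 x) = o x} := by
  let toState (o : {o // IsCrossingTotal τ0 τ1 τ2 o}) :
      Σ A : {A : Set D // (∀ f ∈ A, τ0 f ∈ A) ∧ (∀ f ∈ A, τ2 f ∈ A)},
        {o : D → Bool // (∀ x, o (τ1 x) = !o x) ∧
          ∀ x, o (partialDualPerm τ0 τ2 h0i h2i A.1 A.2.1 A.2.2 x) = o x} :=
    ⟨⟨stateOf τ0 o.1, fun f hf => mapsTo_stateOf h0i o.1 hf,
        fun f hf => o.2.mapsTo_stateOf hcomm hf⟩,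
      o.1, o.2.1, o.2.apply_partialDualPerm_stateOf h0i h2i _ _⟩
  rw [← Nat.card_sigma]
  exact Nat.card_le_card_of_injective toState
    (Injective.of_comp (f := fun p => p.2.1) Subtype.val_injective)

end CrossingTotal

end

theorem crossingTotal_count_bounds_general
    {D : Type*} [Fintype D]
    (τ0 τ1 τ2 : Equiv.Perm D)
    (h0i : ∀ f, τ0 (τ0 f) = f) (h0f : ∀ f, τ0 f ≠ f)
    (h1i : ∀ f, τ1 (τ1 f) = f) (h1f : ∀ f, τ1 f ≠ f)
    (h2i : ∀ f, τ2 (τ2 f) = f) (h2f : ∀ f, τ2 f ≠ f)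
    (hcomm : ∀ f, τ0 (τ2 f) = τ2 (τ0 f))
    (h02f : ∀ f, τ0 (τ2 f) ≠ f)
    -- N is the number of crossing-total directions of the medial graph G_m
    (N : ℕ)
    (hN : N = Nat.card {o : D → Bool //
      (∀ f : D, o (τ1 f) = !o f) ∧
      ∀ f : D,
        (∀ g ∈ MulAction.orbit
            (Subgroup.closure {τ0, τ2} : Subgroup (Equiv.Perm D)) f, o (τ0 g) = o g) ∨
        (∀ g ∈ MulAction.orbit
            (Subgroup.closure {τ0, τ2} : Subgroup (Equiv.Perm D)) f, o (τ2 g) = o g)}) :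
    2 ^ Nat.card (MulAction.orbitRel.Quotient
          (Subgroup.closure {τ1, τ0 * τ2} : Subgroup (Equiv.Perm D)) D) ≤ N ∧
    N ≤ ∑ A : {A : Set D // (∀ f ∈ A, τ0 f ∈ A) ∧ (∀ f ∈ A, τ2 f ∈ A)},
          if (∀ f : D, 4 ∣ Nat.card (MulAction.orbit
                (Subgroup.closure
                  {τ1, partialDualPerm τ0 τ2 h0i h2i A.1 A.2.1 A.2.2} :
                  Subgroup (Equiv.Perm D)) f))
          then 2 ^ Nat.card (MulAction.orbitRel.Quotient
                (Subgroup.closure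
                  {τ1, partialDualPerm τ0 τ2 h0i h2i A.1 A.2.1 A.2.2} :
                  Subgroup (Equiv.Perm D)) D)
          else 0 := by
  change N = Nat.card {o // IsCrossingTotal τ0 τ1 τ2 o} at hN
  subst hN
  refine ⟨two_pow_card_orbits_le_card_isCrossingTotal h0i hcomm h1i h1f h2i h02f,
    (card_isCrossingTotal_le_sum h0i hcomm h2i).trans ?_⟩
  exact Finset.sum_le_sum fun A _ => card_flip_invariant_le_ite _ _
    (partialDualPerm_involutive h0i h2i A.2.1 A.2.2)
    (partialDualPerm_apply_ne h0i h2i A.2.1 A.2.2 h0f h2f)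

/-- **Lemma (bounds on the number of crossing-total directions).**
Let `G = (D, τ0, τ1, τ2)` be a graph-encoded map and let `N` be the number of
crossing-total directions of its medial graph `G_m`.  Then
`2^{t(G_m)} ≤ N ≤ Σ_{S ∈ 𝓔𝓢} 2^{c(S)}`, where `t(G_m)` is the number of
straight-ahead closed walks of `G_m` (orbits of `⟨τ1, τ0 ∘ τ2⟩`), the sum ranges
over the even states of `G` (subsets `A ⊆ D` closed under `τ0` and `τ2` all of whose
state circles, the `⟨τ1, τ2^A⟩`-orbits, have cardinality divisible by 4), and `c(S)`
is the number of state circles of the state `S`. -/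
theorem crossingTotal_count_bounds
    {D : Type*} [Fintype D] [Nonempty D]
    (τ0 τ1 τ2 : Equiv.Perm D)
    (h0i : ∀ f, τ0 (τ0 f) = f) (h0f : ∀ f, τ0 f ≠ f)
    (h1i : ∀ f, τ1 (τ1 f) = f) (h1f : ∀ f, τ1 f ≠ f)
    (h2i : ∀ f, τ2 (τ2 f) = f) (h2f : ∀ f, τ2 f ≠ f)
    (hcomm : ∀ f, τ0 (τ2 f) = τ2 (τ0 f))
    (h02f : ∀ f, τ0 (τ2 f) ≠ f)
    -- N is the number of crossing-total directions of the medial graph G_m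
    (N : ℕ)
    (hN : N = Nat.card {o : D → Bool //
      (∀ f : D, o (τ1 f) = !o f) ∧
      ∀ f : D,
        (∀ g ∈ MulAction.orbit
            (Subgroup.closure {τ0, τ2} : Subgroup (Equiv.Perm D)) f, o (τ0 g) = o g) ∨
        (∀ g ∈ MulAction.orbit
            (Subgroup.closure {τ0, τ2} : Subgroup (Equiv.Perm D)) f, o (τ2 g) = o g)}) :
    2 ^ Nat.card (MulAction.orbitRel.Quotient
          (Subgroup.closure {τ1, τ0 * τ2} : Subgroup (Equiv.Perm D)) D) ≤ N ∧
    N ≤ ∑ A : {A : Set D // (∀ f ∈ A, τ0 f ∈ A) ∧ (∀ f ∈ A, τ2 f ∈ A)},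
          if (∀ f : D, 4 ∣ Nat.card (MulAction.orbit
                (Subgroup.closure
                  {τ1, partialDualPerm τ0 τ2 h0i h2i A.1 A.2.1 A.2.2} :
                  Subgroup (Equiv.Perm D)) f))
          then 2 ^ Nat.card (MulAction.orbitRel.Quotient
                (Subgroup.closure
                  {τ1, partialDualPerm τ0 τ2 h0i h2i A.1 A.2.1 A.2.2} :
                  Subgroup (Equiv.Perm D)) D)
          else 0 :=
  crossingTotal_count_bounds_general τ0 τ1 τ2 h0i h0f h1i h1f h2i h2f hcomm h02f N hN
end

section
/- Let G = (D, τ0, τ1, τ2) be a graph-encoded map (ribbon graph), let A ⊆ D be closed under τ0 and τ2, and suppose A is the set of c-edges arising from an all-crossing direction of the medial graph G_m: there exists o : D → Bool with o(τ1 f) = ¬o(f) for all f ∈ D, with o(τ2 f) = o(f) and o(τ0 f) = ¬o(f) for all f ∈ A, and with o(τ0 f) = o(f) and o(τ2 f) = ¬o(f) for all f ∈ D \ A. Then the partial dual G^A is an even-face graph (every orbit of the subgroup generated by {τ0^A, τ1} has cardinality divisible by 4) and the partial dual G^{D \ A} is Eulerian (every orbit of the subgroup generated by {τ1, τ2^{D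 \ A}} has cardinality divisible by 4). -/
/-- A fixed-point-free involution on a finset (mapping it into itself) forces even
cardinality. -/
lemma even_card_of_fpf_involution {D : Type*} [DecidableEq D] (g : D → D)
    (hinv : ∀ x, g (g x) = x) :
    ∀ s : Finset D, (∀ x ∈ s, g x ∈ s) → (∀ x ∈ s, g x ≠ x) → Even s.card := by
  intro s
  induction s using Finset.strongInduction with
  | _ s ih =>
    intro hcl hfp
    rcases s.eq_empty_or_nonempty with rfl | ⟨x, hx⟩
    · simp
    · have hgx : g x ∈ s := hcl x hx
      have hne : g x ≠ x := hfp x hx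
      set t := s \ {x, g x} with ht
      have hsub : t ⊆ s := Finset.sdiff_subset
      have hxt : x ∉ t := by simp [ht]
      have htlt : t ⊂ s := Finset.ssubset_iff_of_subset hsub |>.2 ⟨x, hx, hxt⟩
      have hteven : Even t.card := by
        refine ih t htlt ?_ ?_
        · intro y hy
          simp only [ht, Finset.mem_sdiff, Finset.mem_insert, Finset.mem_singleton] at hy
          obtain ⟨hys, hy2⟩ := hy
          push_neg at hy2
          simp only [ht, Finset.mem_sdiff, Finset.mem_insert, Finset.mem_singleton]
          refine ⟨hcl y hys, ?_⟩
          push_neg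
          constructor
          · intro h; exact hy2.2 (by rw [← h, hinv])
          · intro h; exact hy2.1 (by have := congrArg g h; rwa [hinv, hinv] at this)
        · intro y hy; exact hfp y (hsub hy)
      have hpair : ({x, g x} : Finset D) ⊆ s := by
        intro y hy
        simp only [Finset.mem_insert, Finset.mem_singleton] at hy
        rcases hy with rfl | rfl <;> assumption
      have hcard : t.card = s.card - 2 := by
        rw [ht, Finset.card_sdiff_of_subset hpair, Finset.card_insert_of_notMem (by simp [hne.symm]),
          Finset.card_singleton]
      have h2le : 2 ≤ s.card := by
        calc 2 = ({x, g x} : Finset D).card := by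
              rw [Finset.card_insert_of_notMem (by simp [hne.symm]), Finset.card_singleton]
          _ ≤ s.card := Finset.card_le_card hpair
      have : s.card = t.card + 2 := by omega
      rw [this]
      exact hteven.add (by norm_num)

/-- Key counting lemma: if an orbit is invariant under a fixed-point-free involution `σ`
preserving a 2-colouring `o`, and under a permutation `τ` flipping `o`, then the orbit
cardinality is divisible by 4. -/
lemma four_dvd_orbit {D : Type*} [Fintype D] (σ τ : Equiv.Perm D) (o : D → Bool)
    (hσinv : ∀ x, σ (σ x) = x) (hσfpf : ∀ x, σ x ≠ x)
    (hσo : ∀ x, o (σ x) = o x) (hτo : ∀ x, o (τ x) = !o x) (f : D) :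
    4 ∣ Nat.card (MulAction.orbit (Subgroup.closure {σ, τ} : Subgroup (Equiv.Perm D)) f) := by
  classical
  set H : Subgroup (Equiv.Perm D) := Subgroup.closure {σ, τ} with hH
  set Ω : Set D := MulAction.orbit H f with hΩ
  have hσH : σ ∈ H := Subgroup.subset_closure (by simp)
  have hτH : τ ∈ H := Subgroup.subset_closure (by simp)
  have hσΩ : ∀ x ∈ Ω, σ x ∈ Ω := by
    rintro x ⟨h, rfl⟩
    exact ⟨⟨σ, hσH⟩ * h, rfl⟩
  have hτΩ : ∀ x ∈ Ω, τ x ∈ Ω := by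
    rintro x ⟨h, rfl⟩
    exact ⟨⟨τ, hτH⟩ * h, rfl⟩
  have hfin : Ω.Finite := Set.toFinite Ω
  set T : Finset D := hfin.toFinset with hT
  have hmemT : ∀ x, x ∈ T ↔ x ∈ Ω := fun x => hfin.mem_toFinset
  have hcardT : Nat.card Ω = T.card := by
    rw [Nat.card_coe_set_eq, Set.ncard_eq_toFinset_card Ω hfin]
  set Tt : Finset D := T.filter (fun x => o x = true) with hTt
  set Tf : Finset D := T.filter (fun x => ¬ o x = true) with hTf
  have hsplit : Tt.card + Tf.card = T.card := Finset.card_filter_add_card_filter_not _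
  -- τ gives a bijection between Tt and Tf
  have hbij : Tt.card = Tf.card := by
    refine Finset.card_bij' (fun x _ => τ x) (fun x _ => τ.symm x) ?_ ?_ ?_ ?_
    · intro x hx
      simp only [hTt, Finset.mem_filter, hmemT] at hx
      simp only [hTf, Finset.mem_filter, hmemT]
      exact ⟨hτΩ x hx.1, by simp [hτo x, hx.2]⟩
    · intro x hx
      simp only [hTf, Finset.mem_filter, hmemT, Bool.not_eq_true] at hx
      simp only [hTt, Finset.mem_filter, hmemT]
      have hx' : x = τ (τ.symm x) := (Equiv.apply_symm_apply τ x).symm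
      have h1 : o (τ (τ.symm x)) = !o (τ.symm x) := hτo _
      rw [← hx', hx.2] at h1
      constructor
      · have := hτΩ x hx.1
        -- τ⁻¹ x ∈ Ω : use that τ⁻¹ ∈ H
        obtain ⟨h, hh⟩ := hx.1
        refine ⟨(⟨τ, hτH⟩ : H)⁻¹ * h, ?_⟩
        have hh' : h • f = x := hh
        show (((⟨τ, hτH⟩ : H)⁻¹ * h) : H) • f = τ.symm x
        rw [mul_smul, hh']
        rfl
      · cases hoi : o (τ.symm x)
        · rw [hoi] at h1; simp at h1
        · rfl
    · intro x _; exact Equiv.symm_apply_apply τ x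
    · intro x _; exact Equiv.apply_symm_apply τ x
  -- σ is a fixed-point-free involution on Tt
  have hTteven : Even Tt.card := by
    refine even_card_of_fpf_involution σ hσinv Tt ?_ ?_
    · intro x hx
      simp only [hTt, Finset.mem_filter, hmemT] at hx ⊢
      exact ⟨hσΩ x hx.1, by rw [hσo x]; exact hx.2⟩
    · intro x _; exact hσfpf x
  obtain ⟨k, hk⟩ := hTteven
  rw [hcardT, ← hsplit, ← hbij, hk]
  exact ⟨k, by ring⟩

/-- **Lemma (c-edges of an all-crossing direction give even-face and Eulerian duals).**
Let `G = (D, τ0, τ1, τ2)` be a graph-encoded map and `A ⊆ D` closed under `τ0` and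
`τ2`.  Suppose `A` is the set of `c`-edges arising from an all-crossing direction `o`
of the medial graph `G_m`.  Then the partial dual `G^A` is an even-face graph (every
`⟨τ0^A, τ1⟩`-orbit has cardinality divisible by 4) and the partial dual `G^{D \ A}`
is Eulerian (every `⟨τ1, τ2^{D \ A}⟩`-orbit has cardinality divisible by 4). -/
theorem evenFace_and_eulerian_of_allCrossing_cEdges
    {D : Type*} [Fintype D] [Nonempty D]
    (τ0 τ1 τ2 : Equiv.Perm D)
    (h0i : ∀ f, τ0 (τ0 f) = f) (h0f : ∀ f, τ0 f ≠ f)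
    (h1i : ∀ f, τ1 (τ1 f) = f) (h1f : ∀ f, τ1 f ≠ f)
    (h2i : ∀ f, τ2 (τ2 f) = f) (h2f : ∀ f, τ2 f ≠ f)
    (hcomm : ∀ f, τ0 (τ2 f) = τ2 (τ0 f))
    (h02f : ∀ f, τ0 (τ2 f) ≠ f)
    (A : Set D) (hA0 : ∀ f ∈ A, τ0 f ∈ A) (hA2 : ∀ f ∈ A, τ2 f ∈ A)
    -- A is the set of c-edges of an all-crossing direction o of G_m
    (ho : ∃ o : D → Bool,
      (∀ f : D, o (τ1 f) = !o f) ∧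
      (∀ f ∈ A, o (τ2 f) = o f ∧ o (τ0 f) = !o f) ∧
      (∀ f ∉ A, o (τ0 f) = o f ∧ o (τ2 f) = !o f))
    -- σ0 is τ0^A : agrees with τ2 on A and with τ0 on D \ A
    (σ0 : Equiv.Perm D)
    (hσ0in : ∀ f ∈ A, σ0 f = τ2 f) (hσ0out : ∀ f ∉ A, σ0 f = τ0 f)
    -- ρ2 is τ2^{D \ A} : agrees with τ0 on D \ A and with τ2 on A
    (ρ2 : Equiv.Perm D)
    (hρ2in : ∀ f ∈ A, ρ2 f = τ2 f) (hρ2out : ∀ f ∉ A, ρ2 f = τ0 f) :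
    (∀ f : D, 4 ∣ Nat.card
        (MulAction.orbit (Subgroup.closure {σ0, τ1} : Subgroup (Equiv.Perm D)) f)) ∧
    (∀ f : D, 4 ∣ Nat.card
        (MulAction.orbit (Subgroup.closure {τ1, ρ2} : Subgroup (Equiv.Perm D)) f)) := by
  classical
  obtain ⟨o, ho1, hoA, hoA'⟩ := ho
  -- σ0 is a fixed-point-free involution preserving o
  have hσinv : ∀ x, σ0 (σ0 x) = x := by
    intro x
    by_cases hx : x ∈ A
    · rw [hσ0in x hx, hσ0in _ (hA2 x hx), h2i]
    · have h0 : τ0 x ∉ A := fun h => hx (by rw [← h0i x]; exact hA0 _ h)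
      rw [hσ0out x hx, hσ0out _ h0, h0i]
  have hσfpf : ∀ x, σ0 x ≠ x := by
    intro x
    by_cases hx : x ∈ A
    · rw [hσ0in x hx]; exact h2f x
    · rw [hσ0out x hx]; exact h0f x
  have hσo : ∀ x, o (σ0 x) = o x := by
    intro x
    by_cases hx : x ∈ A
    · rw [hσ0in x hx]; exact (hoA x hx).1
    · rw [hσ0out x hx]; exact (hoA' x hx).1
  have main := four_dvd_orbit σ0 τ1 o hσinv hσfpf hσo ho1
  have hρσ : ρ2 = σ0 := by
    ext x
    by_cases hx : x ∈ A
    · rw [hρ2in x hx, hσ0in x hx]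
    · rw [hρ2out x hx, hσ0out x hx]
  refine ⟨main, ?_⟩
  rw [hρσ]
  have hset : ({τ1, σ0} : Set (Equiv.Perm D)) = {σ0, τ1} := Set.pair_comm τ1 σ0
  rw [hset]
  exact main
end

section
/- Let G = (D, τ0, τ1, τ2) be a graph-encoded map (ribbon graph) and let A ⊆ D be closed under τ0 and τ2. If the partial dual G^A is bipartite, i.e., there exists χ : D → Bool constant on every orbit of the subgroup generated by {τ1, τ2^A} with χ(τ0^A f) = ¬χ(f) for every flag f, then the partial dual G^{D \ A} is Eulerian, i.e., every orbit of the subgroup generated by {τ1, τ2^{D \ A}} has cardinality divisible by 4. -/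
/-!
Write `O` for a vertex of `G^{D \ A}`, an orbit of `⟨τ1, τ2^{D \ A}⟩`. Since `τ2^{D \ A} = τ0^A`,
a bipartition `χ` of `G^A` is constant along `τ1` and flipped by `τ2^{D \ A}`. Hence
`τ2^{D \ A}` maps the two colour classes of `O` injectively into each other, so they have the same
size, and `τ1` is a fixed-point-free involution of each class, so that size is even.
-/

open Set Function

namespace Set

variable {α : Type*}

theorem even_ncard_of_involutive {s : Set α} {τ : α → α} (hτ : Involutive τ)
    (hfree : ∀ x, τ x ≠ x) (hs : MapsTo τ s s) : Even s.ncard := by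
  obtain hfin | hinf := s.finite_or_infinite
  · have hsum : ∑ _x ∈ hfin.toFinset, (1 : ZMod 2) = 0 :=
      Finset.sum_involution (fun x _ => τ x) (fun _ _ => rfl) (fun x _ _ => hfree x)
        (fun x hx => by simpa using hs (by simpa using hx)) (fun x _ => hτ x)
    rw [Finset.sum_const, nsmul_one, ZMod.natCast_eq_zero_iff,
      ← ncard_eq_toFinset_card s hfin] at hsum
    exact even_iff_two_dvd.mpr hsum
  · simp [hinf.ncard]

theorem four_dvd_ncard_of_involutive_of_flip {s : Set α} {τ ρ : α → α} (χ : α → Bool)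
    (hτ : Involutive τ) (hfree : ∀ x, τ x ≠ x) (hτs : MapsTo τ s s) (hχτ : ∀ x, χ (τ x) = χ x)
    (hρ : Injective ρ) (hρs : MapsTo ρ s s) (hχρ : ∀ x, χ (ρ x) = !χ x) : 4 ∣ s.ncard := by
  obtain hfin | hinf := s.finite_or_infinite
  swap
  · simp [hinf.ncard]
  set T := s ∩ {x | χ x}
  set F := s \ {x | χ x}
  have hT : Even T.ncard :=
    even_ncard_of_involutive hτ hfree fun x hx => ⟨hτs hx.1, by simpa [hχτ] using hx.2⟩
  have hTF : T.ncard = F.ncard := by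
    refine le_antisymm (ncard_le_ncard_of_injOn ρ ?_ hρ.injOn hfin.sdiff)
      (ncard_le_ncard_of_injOn ρ ?_ hρ.injOn (hfin.inter_of_left _)) <;>
    exact fun x hx => ⟨hρs hx.1, by simpa [hχρ] using hx.2⟩
  have hsplit : T.ncard + F.ncard = s.ncard := ncard_inter_add_ncard_sdiff_eq_ncard s _ hfin
  obtain ⟨k, hk⟩ := hT
  exact ⟨k, by omega⟩

end Set

theorem eulerian_complement_of_bipartite_partialDual_general
    {D : Type*}
    (τ0 τ1 τ2 : Equiv.Perm D)
    (h1i : ∀ f, τ1 (τ1 f) = f) (h1f : ∀ f, τ1 f ≠ f)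
    (A : Set D)
    -- σ0 is τ0^A and σ2 is τ2^A
    (σ0 σ2 : Equiv.Perm D)
    (hσ0in : ∀ f ∈ A, σ0 f = τ2 f) (hσ0out : ∀ f ∉ A, σ0 f = τ0 f)
    -- ρ2 is τ2^{D \ A} : agrees with τ0 on D \ A and with τ2 on A
    (ρ2 : Equiv.Perm D)
    (hρ2in : ∀ f ∈ A, ρ2 f = τ2 f) (hρ2out : ∀ f ∉ A, ρ2 f = τ0 f)
    -- G^A is bipartite
    (hbip : ∃ χ : D → Bool,
      (∀ f : D, ∀ g ∈ MulAction.orbit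
          (Subgroup.closure {τ1, σ2} : Subgroup (Equiv.Perm D)) f, χ g = χ f) ∧
      (∀ f : D, χ (σ0 f) = !χ f)) :
    ∀ f : D, 4 ∣ Nat.card
      (MulAction.orbit (Subgroup.closure {τ1, ρ2} : Subgroup (Equiv.Perm D)) f) := by
  intro f
  obtain ⟨χ, hχ_orbit, hχ_flip⟩ := hbip
  have hρσ : ρ2 = σ0 := by
    ext x
    by_cases hx : x ∈ A
    · rw [hρ2in x hx, hσ0in x hx]
    · rw [hρ2out x hx, hσ0out x hx]
  have hχτ1 : ∀ x, χ (τ1 x) = χ x := fun x =>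
    hχ_orbit x _ (MulAction.mem_orbit x
      (⟨τ1, Subgroup.subset_closure (mem_insert _ _)⟩ : Subgroup.closure {τ1, σ2}))
  let H : Subgroup (Equiv.Perm D) := Subgroup.closure {τ1, ρ2}
  rw [Nat.card_coe_set_eq]
  exact four_dvd_ncard_of_involutive_of_flip χ h1i h1f
    (MulAction.mapsTo_smul_orbit (⟨τ1, Subgroup.subset_closure (mem_insert _ _)⟩ : H) f) hχτ1
    ρ2.injective
    (MulAction.mapsTo_smul_orbit (⟨ρ2, Subgroup.subset_closure (mem_insert_of_mem _ rfl)⟩ : H) f)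
    (hρσ ▸ hχ_flip)

/-- **Lemma (bipartite partial dual gives Eulerian complementary partial dual).**
Let `G = (D, τ0, τ1, τ2)` be a graph-encoded map and `A ⊆ D` closed under `τ0` and
`τ2`.  If the partial dual `G^A` is bipartite (there is `χ : D → Bool` constant on
every `⟨τ1, τ2^A⟩`-orbit with `χ (τ0^A f) = ¬ χ f` for every flag `f`), then the
partial dual `G^{D \ A}` is Eulerian (every `⟨τ1, τ2^{D \ A}⟩`-orbit has cardinality
divisible by 4). -/
theorem eulerian_complement_of_bipartite_partialDual
    {D : Type*} [Fintype D] [Nonempty D]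
    (τ0 τ1 τ2 : Equiv.Perm D)
    (h0i : ∀ f, τ0 (τ0 f) = f) (h0f : ∀ f, τ0 f ≠ f)
    (h1i : ∀ f, τ1 (τ1 f) = f) (h1f : ∀ f, τ1 f ≠ f)
    (h2i : ∀ f, τ2 (τ2 f) = f) (h2f : ∀ f, τ2 f ≠ f)
    (hcomm : ∀ f, τ0 (τ2 f) = τ2 (τ0 f))
    (h02f : ∀ f, τ0 (τ2 f) ≠ f)
    (A : Set D) (hA0 : ∀ f ∈ A, τ0 f ∈ A) (hA2 : ∀ f ∈ A, τ2 f ∈ A)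
    -- σ0 is τ0^A and σ2 is τ2^A
    (σ0 σ2 : Equiv.Perm D)
    (hσ0in : ∀ f ∈ A, σ0 f = τ2 f) (hσ0out : ∀ f ∉ A, σ0 f = τ0 f)
    (hσ2in : ∀ f ∈ A, σ2 f = τ0 f) (hσ2out : ∀ f ∉ A, σ2 f = τ2 f)
    -- ρ2 is τ2^{D \ A} : agrees with τ0 on D \ A and with τ2 on A
    (ρ2 : Equiv.Perm D)
    (hρ2in : ∀ f ∈ A, ρ2 f = τ2 f) (hρ2out : ∀ f ∉ A, ρ2 f = τ0 f)
    -- G^A is bipartite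
    (hbip : ∃ χ : D → Bool,
      (∀ f : D, ∀ g ∈ MulAction.orbit
          (Subgroup.closure {τ1, σ2} : Subgroup (Equiv.Perm D)) f, χ g = χ f) ∧
      (∀ f : D, χ (σ0 f) = !χ f)) :
    ∀ f : D, 4 ∣ Nat.card
      (MulAction.orbit (Subgroup.closure {τ1, ρ2} : Subgroup (Equiv.Perm D)) f) :=
  eulerian_complement_of_bipartite_partialDual_general τ0 τ1 τ2 h1i h1f A σ0 σ2 hσ0in hσ0out ρ2
    hρ2in hρ2out hbip
end

section
/- Let G = (D, τ0, τ1, τ2) be a graph-encoded map that is a plane graph, i.e., G is orientable and satisfies Euler's formula: (number of ⟨τ1, τ2⟩-orbits) − (card D)/4 + (number of ⟨τ0, τ1⟩-orbits) = 2 · (number of orbits of the subgroup generated by {τ0, τ1, τ2}). Let A ⊆ D be closed under τ0 and τ2. Then the partial dual G^A is bipartite if and only if there exists an all-crossing direction of the medial graph G_m whose set of c-edges is exactly the set of edges contained in A; explicitly, if and only if there exists o : D → Bool with o(τ1 f) = ¬o(f) for all f ∈ D, with o(τ2 f) = o(f) and o(τ0 f) = ¬o(f) for all f ∈ A, and with o(τ0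 f) = o(f) and o(τ2 f) = ¬o(f) for all f ∈ D \ A. -/
/-- **Corollary (Huggett–Moffatt: bipartite partial duals of plane graphs).**
Let `G = (D, τ0, τ1, τ2)` be a graph-encoded map which is a plane graph: `G` is
orientable and satisfies Euler's formula
`#vertices + #faces = 2 · #components + #edges` (with `#edges = |D| / 4`).
Let `A ⊆ D` be closed under `τ0` and `τ2`, and let `σ0 = τ0^A`, `σ2 = τ2^A` be the
involutions of the partial dual `G^A`.  Then `G^A` is bipartite iff there is an
all-crossing direction of the medial graph `G_m` whose set of `c`-edges is exactly
the set of edges contained in `A`. -/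
theorem bipartite_partialDual_iff_allCrossing_plane
    {D : Type*} [Fintype D] [Nonempty D]
    (τ0 τ1 τ2 : Equiv.Perm D)
    (h0i : ∀ f, τ0 (τ0 f) = f) (h0f : ∀ f, τ0 f ≠ f)
    (h1i : ∀ f, τ1 (τ1 f) = f) (h1f : ∀ f, τ1 f ≠ f)
    (h2i : ∀ f, τ2 (τ2 f) = f) (h2f : ∀ f, τ2 f ≠ f)
    (hcomm : ∀ f, τ0 (τ2 f) = τ2 (τ0 f))
    (h02f : ∀ f, τ0 (τ2 f) ≠ f)
    -- G is orientable
    (horient : ∃ ε : D → Bool, ∀ f,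
      ε (τ0 f) = !ε f ∧ ε (τ1 f) = !ε f ∧ ε (τ2 f) = !ε f)
    -- G satisfies Euler's formula: V − E + F = 2 C, i.e. V + F = 2 C + E
    (heuler :
      Nat.card (MulAction.orbitRel.Quotient
        (Subgroup.closure {τ1, τ2} : Subgroup (Equiv.Perm D)) D) +
      Nat.card (MulAction.orbitRel.Quotient
        (Subgroup.closure {τ0, τ1} : Subgroup (Equiv.Perm D)) D) =
      2 * Nat.card (MulAction.orbitRel.Quotient
        (Subgroup.closure {τ0, τ1, τ2} : Subgroup (Equiv.Perm D)) D) +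
      Fintype.card D / 4)
    (A : Set D) (hA0 : ∀ f ∈ A, τ0 f ∈ A) (hA2 : ∀ f ∈ A, τ2 f ∈ A)
    -- σ0 is τ0^A and σ2 is τ2^A
    (σ0 σ2 : Equiv.Perm D)
    (hσ0in : ∀ f ∈ A, σ0 f = τ2 f) (hσ0out : ∀ f ∉ A, σ0 f = τ0 f)
    (hσ2in : ∀ f ∈ A, σ2 f = τ0 f) (hσ2out : ∀ f ∉ A, σ2 f = τ2 f) :
    -- G^A is bipartite
    (∃ χ : D → Bool,
      (∀ f : D, ∀ g ∈ MulAction.orbit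
          (Subgroup.closure {τ1, σ2} : Subgroup (Equiv.Perm D)) f, χ g = χ f) ∧
      (∀ f : D, χ (σ0 f) = !χ f)) ↔
    -- A is the set of c-edges of an all-crossing direction of G_m
    (∃ o : D → Bool,
      (∀ f : D, o (τ1 f) = !o f) ∧
      (∀ f ∈ A, o (τ2 f) = o f ∧ o (τ0 f) = !o f) ∧
      (∀ f ∉ A, o (τ0 f) = o f ∧ o (τ2 f) = !o f)) := by
  obtain ⟨ε, hε⟩ := horient
  constructor
  · rintro ⟨χ, hχorb, hχ0⟩
    have h1 : ∀ f, χ (τ1 f) = χ f := fun f =>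
      hχorb f (τ1 f) ⟨⟨τ1, Subgroup.subset_closure (by simp)⟩, rfl⟩
    have h2 : ∀ f, χ (σ2 f) = χ f := fun f =>
      hχorb f (σ2 f) ⟨⟨σ2, Subgroup.subset_closure (by simp)⟩, rfl⟩
    refine ⟨fun f => xor (χ f) (ε f), ?_, ?_, ?_⟩
    · intro f
      obtain ⟨-, he1, -⟩ := hε f
      show xor (χ (τ1 f)) (ε (τ1 f)) = !xor (χ f) (ε f)
      rw [h1 f, he1]
      cases χ f <;> cases ε f <;> rfl
    · intro f hf
      obtain ⟨he0, -, he2⟩ := hε f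
      have hc2 : χ (τ2 f) = !χ f := by rw [← hσ0in f hf, hχ0]
      have hc0 : χ (τ0 f) = χ f := by rw [← hσ2in f hf, h2]
      constructor
      · show xor (χ (τ2 f)) (ε (τ2 f)) = xor (χ f) (ε f)
        rw [hc2, he2]; cases χ f <;> cases ε f <;> rfl
      · show xor (χ (τ0 f)) (ε (τ0 f)) = !xor (χ f) (ε f)
        rw [hc0, he0]; cases χ f <;> cases ε f <;> rfl
    · intro f hf
      obtain ⟨he0, -, he2⟩ := hε f
      have hc0 : χ (τ0 f) = !χ f := by rw [← hσ0out f hf, hχ0]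
      have hc2 : χ (τ2 f) = χ f := by rw [← hσ2out f hf, h2]
      constructor
      · show xor (χ (τ0 f)) (ε (τ0 f)) = xor (χ f) (ε f)
        rw [hc0, he0]; cases χ f <;> cases ε f <;> rfl
      · show xor (χ (τ2 f)) (ε (τ2 f)) = !xor (χ f) (ε f)
        rw [hc2, he2]; cases χ f <;> cases ε f <;> rfl
  · rintro ⟨o, ho1, hoA, hoB⟩
    set χ : D → Bool := fun f => xor (o f) (ε f) with hχdef
    have hχ : ∀ f, χ f = xor (o f) (ε f) := fun f => rfl
    have hg1 : ∀ f, χ (τ1 f) = χ f := by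
      intro f
      obtain ⟨-, he1, -⟩ := hε f
      rw [hχ, hχ, ho1 f, he1]
      cases o f <;> cases ε f <;> rfl
    have hg2 : ∀ f, χ (σ2 f) = χ f := by
      intro f
      obtain ⟨he0, -, he2⟩ := hε f
      by_cases hf : f ∈ A
      · rw [hσ2in f hf, hχ, hχ, (hoA f hf).2, he0]
        cases o f <;> cases ε f <;> rfl
      · rw [hσ2out f hf, hχ, hχ, (hoB f hf).2, he2]
        cases o f <;> cases ε f <;> rfl
    have key : ∀ g ∈ Subgroup.closure ({τ1, σ2} : Set (Equiv.Perm D)),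
        ∀ f, χ (g f) = χ f := by
      intro g hg
      induction hg using Subgroup.closure_induction with
      | mem x hx =>
        rcases hx with h | h
        · subst h; exact hg1
        · subst h; exact hg2
      | one => intro f; rfl
      | mul x y hx hy ihx ihy =>
        intro f
        have : (x * y) f = x (y f) := rfl
        rw [this, ihx, ihy]
      | inv x hx ih =>
        intro f
        have := ih (x⁻¹ f)
        simpa using this.symm
    refine ⟨χ, ?_, ?_⟩
    · rintro f g ⟨⟨h, hh⟩, rfl⟩
      exact key h hh f
    · intro f
      obtain ⟨he0, -, he2⟩ := hε f
      by_cases hf : f ∈ A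
      · rw [hσ0in f hf, hχ, hχ, (hoA f hf).1, he2]
        cases o f <;> cases ε f <;> rfl
      · rw [hσ0out f hf, hχ, hχ, (hoB f hf).1, he0]
        cases o f <;> cases ε f <;> rfl
end
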